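/- arXiv:2211.13456 — 7 statements merged into one kernel-verified Lean document; each statement's English description precedes it below -/
import Mathlib

section
/- Suppose W ⊆ V⊗ℝ^ℓ is a geometric space and set α = −κ′(1)/log m. Then: (1) for every v ∈ 𝕄^W one has (1/m)∑_{j=1}^m (1+v_j)·log(1+v_j) ≤ α·log m (with the convention 0·log 0 = 0); and (2) m^{1−α} is a positive integer and there exist v ∈ 𝕄^W and a set H ⊆ {1,…,m} with |H| = m^{1−α} such that v_j = m^α − 1 for j ∈ H and v_j = −1 for j ∉ H; for this v the inequality in (1) is an equality. -/
/-!
Write `p = 1 + v` for `v ∈ 𝕄^W`, so that `p ≥ 0` and `∑ p = m`. Since `κ_v(1/s) ≤ κ(1/s)`,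
geometricity says `∑ p_j ^ s ≤ m · m^{α (s - 1)}` for all `s ≥ 1`, with equality at `s = 1`;
comparing right derivatives at `s = 1` gives the entropy bound. The set `𝕄^W` is compact, so
`κ(1/2)` is attained by some `v`, i.e. `∑ p² = m^{1+α}`. Then
`∑ p · ∑ p³ ≤ m · m^{1+2α} = (∑ p²)²` is an equality case of Cauchy–Schwarz, so `p` is constant
on its support, and the two power sums force that constant to be `m^α` and the support to have
`m^{1-α}` elements.
-/

open MeasureTheory Finset

noncomputable section

namespace TracePaper

variable {ι : Type} [Fintype ι]
variable {E : Type} [AddCommGroup E] [Module ℝ E]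

/-- A martingale adapted to the `ι`-uniform filtration, recorded by its values on atoms:
`val n c` is the value of `F_n` on the atom determined by the digit string `c`. -/
structure Mart (ι : Type) [Fintype ι] (E : Type) [AddCommGroup E] [Module ℝ E] where
  val : (n : ℕ) → (Fin n → ι) → E
  avg_eq : ∀ (n : ℕ) (c : Fin n → ι),
    val n c = (Fintype.card ι : ℝ)⁻¹ • ∑ j : ι, val (n + 1) (Fin.snoc c j)

/-- The martingale difference `dF_{n+1}|_ω` on the atom `ω = c ∈ 𝒜ℱ_n`, as an element of
`V ⊗ E` (an `ι`-tuple with zero average). -/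
def diff (F : Mart ι E) (n : ℕ) (c : Fin n → ι) : ι → E :=
  fun j => F.val (n + 1) (Fin.snoc c j) - F.val n c

/-- `F ∈ 𝕎`: all martingale differences lie in `W`. -/
def MemSpace (W : Set (ι → E)) (F : Mart ι E) : Prop :=
  ∀ (n : ℕ) (c : Fin n → ι), diff F n c ∈ W

/-- A simple martingale: all but finitely many differences vanish. -/
def Simple (F : Mart ι E) : Prop :=
  ∃ N : ℕ, ∀ n, N ≤ n → ∀ c : Fin n → ι, diff F n c = 0

/-- Average of an `ι`-tuple. -/
def avg (X : ι → E) : E := (Fintype.card ι : ℝ)⁻¹ • ∑ j, X j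

/-- The set `𝕄^W` of admissible `0`-flat increments. -/
def MW (W : Set (ι → E)) : Set (ι → ℝ) :=
  {v | (∑ j, v j = 0) ∧ (∀ j, -1 ≤ v j) ∧ ∃ a : E, a ≠ 0 ∧ (fun j => v j • a) ∈ W}

/-- `κ_v(θ) = θ log((1/m) ∑_j |1+v_j|^{1/θ})`, extended by continuity at `θ = 0`. -/
def kappaV (ι : Type) [Fintype ι] (v : ι → ℝ) (θ : ℝ) : ℝ :=
  if θ = 0 then Real.log (⨆ j, |1 + v j|)
  else θ * Real.log ((Fintype.card ι : ℝ)⁻¹ * ∑ j, |1 + v j| ^ (1 / θ))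

/-- `κ(θ) = sup {κ_v(θ) : v ∈ 𝕄^W}`. -/
def kappa (W : Set (ι → E)) (θ : ℝ) : ℝ :=
  sSup {r | ∃ v ∈ MW W, r = kappaV ι v θ}

/-- `κ'(1) = inf { -(1/m) ∑_j (1+v_j) log(1+v_j) : v ∈ 𝕄^W }`. -/
def kprime1 (W : Set (ι → E)) : ℝ :=
  sInf {r | ∃ v ∈ MW W,
    r = -((Fintype.card ι : ℝ)⁻¹ * ∑ j, (1 + v j) * Real.log (1 + v j))}

/-- `W` is geometric (κ affine) with `α = -κ'(1)/log m`; equivalently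
`κ(θ) = α (log m)(1-θ)` on `[0,1]`. -/
def GeometricOfOrder (W : Set (ι → E)) (α : ℝ) : Prop :=
  ∀ θ ∈ Set.Icc (0 : ℝ) 1, kappa W θ = α * Real.log (Fintype.card ι) * (1 - θ)

/-- `w = v ⊗ a` is an extremal vector with support `H`. -/
def IsExtremal (W : Set (ι → E)) (α : ℝ) (w : ι → E) (H : Finset ι) : Prop :=
  w ∈ W ∧ ∃ a : E, a ≠ 0 ∧ (H.card : ℝ) = (Fintype.card ι : ℝ) ^ ((1 : ℝ) - α) ∧
    (∀ j ∈ H, w j = ((Fintype.card ι : ℝ) ^ α - 1) • a) ∧ ∀ j ∉ H, w j = -a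

/-- `φ` is a canceling operator. -/
def Canceling (W : Set (ι → E)) (α : ℝ) (φ : (ι → E) → ι → ℝ) : Prop :=
  ∀ (w : ι → E) (H : Finset ι), IsExtremal W α w H → ∀ j ∈ H, φ w j = 0

/-- `W` is a non-local space (of order `α`). -/
def NonLocal (W : Set (ι → E)) (α : ℝ) : Prop :=
  ∀ (w : ι → E) (H : Finset ι), IsExtremal W α w H →
    ∀ u ∈ W, ∀ b : E, (∀ j ∉ H, b + u j = 0) → ∃ c : ℝ, u = c • w

/-- The martingale transform `𝕀_α[F]`, as a function of the path `γ ∈ 𝕋`. -/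
def Ialpha (φ : (ι → E) → ι → ℝ) (α : ℝ) (F : Mart ι E) (γ : ℕ → ι) : ℝ :=
  ∑' n : ℕ, (Fintype.card ι : ℝ) ^ (-(α * n)) *
    φ (diff F n (fun i : Fin n => γ i)) (γ n)

/-- The cylinder (atom of `ℱ_n`) determined by the digit string `c`. -/
def cyl (n : ℕ) (c : Fin n → ι) : Set (ℕ → ι) := {γ | ∀ i : Fin n, γ i = c i}

/-- The Borel σ-algebra of `𝕋` (= the product σ-algebra). -/
def treeMS (ι : Type) : MeasurableSpace (ℕ → ι) :=
  @MeasurableSpace.pi ℕ (fun _ => ι) (fun _ => ⊤)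

section Normed
variable {E' : Type} [NormedAddCommGroup E'] [NormedSpace ℝ E']

/-- `‖F‖_{L¹} = sup_n 𝔼 |F_n|`. -/
def L1Norm (F : Mart ι E') : ℝ :=
  ⨆ n : ℕ, ((Fintype.card ι : ℝ) ^ n)⁻¹ * ∑ c : Fin n → ι, ‖F.val n c‖

/-- The bilinear trace inequality
`∫_𝕋 |𝕀_α[F]| dν ≲ (sup_{n,ω} m^{(1-α)n} ν(ω)) ‖F‖_{L¹}`. -/
def TraceIneq (W : Set (ι → E')) (φ : (ι → E') → ι → ℝ) (α : ℝ) : Prop :=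
  ∃ C : ℝ, ∀ ν : @Measure (ℕ → ι) (treeMS ι), IsFiniteMeasure ν →
    ∀ F : Mart ι E', MemSpace W F → Simple F →
      ∀ A : ℝ,
        (∀ (n : ℕ) (c : Fin n → ι),
          (Fintype.card ι : ℝ) ^ (((1 : ℝ) - α) * n) * (ν (cyl n c)).toReal ≤ A) →
        ∫ γ, |Ialpha φ α F γ| ∂ν ≤ C * A * L1Norm F

/-- The Bellman main inequality for `G` on the Bellman domain. -/
def MainInequality (W : Set (ι → E')) (φ : (ι → E') → ι → ℝ) (α : ℝ)
    (G : E' → ℝ → ℝ → ℝ → ℝ → ℝ) : Prop :=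
  ∀ (X : ι → E') (y : ℝ) (Z T S : ι → ℝ),
    (∀ j, ‖X j‖ ≤ Z j) → (∀ j, 0 ≤ T j) → (∀ j, T j ≤ S j) →
    (fun j => X j - avg X) ∈ W →
    (Fintype.card ι : ℝ) ^ (-α) *
        ∑ j, G (X j) ((Fintype.card ι : ℝ) ^ α * y + φ (fun i => X i - avg X) j)
          (Z j) (T j) (S j)
      ≤ G (avg X) y ((Fintype.card ι : ℝ)⁻¹ * ∑ j, Z j) (∑ j, T j)
          (max (∑ j, T j) ((Fintype.card ι : ℝ) ^ ((1 : ℝ) - α) * ⨆ j, S j))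

/-- The boundary inequality `G(x, y, |x|, t, s) ≥ |y| t`. -/
def BoundaryIneq (G : E' → ℝ → ℝ → ℝ → ℝ → ℝ) : Prop :=
  ∀ (x : E') (y t s : ℝ), 0 ≤ t → t ≤ s → |y| * t ≤ G x y ‖x‖ t s

/-- A supersolution: main inequality + boundary inequality. -/
def Supersolution (W : Set (ι → E')) (φ : (ι → E') → ι → ℝ) (α : ℝ)
    (G : E' → ℝ → ℝ → ℝ → ℝ → ℝ) : Prop :=
  MainInequality W φ α G ∧ BoundaryIneq G

end Normed

open Real in
theorem add_mul_mul_log_le_rpow {p δ : ℝ} (hp : 0 ≤ p) (hδ : 0 ≤ δ) :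
    p + δ * (p * log p) ≤ p ^ (1 + δ) := by
  rcases hp.eq_or_lt with rfl | hp
  · simp [zero_rpow (by positivity : 1 + δ ≠ 0)]
  · rw [rpow_add hp, rpow_one, rpow_def_of_pos hp]
    nlinarith [mul_le_mul_of_nonneg_left (add_one_le_exp (log p * δ)) hp.le]

theorem le_of_forall_pos_one_add_mul_le_exp {x c : ℝ}
    (h : ∀ δ > 0, 1 + δ * x ≤ Real.exp (c * δ)) : x ≤ c := by
  have hderiv : HasDerivAt (fun δ => Real.exp (c * δ)) c 0 := by
    simpa using ((hasDerivAt_id (0 : ℝ)).const_mul c).exp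
  refine ge_of_tendsto hderiv.tendsto_slope_zero_right ?_
  filter_upwards [self_mem_nhdsWithin] with δ (hδ : 0 < δ)
  rw [smul_eq_mul, le_inv_mul_iff₀ hδ]
  simp only [zero_add, mul_zero, Real.exp_zero]
  linarith [h δ hδ]

theorem sum_mul_log_le_of_sum_rpow_le {p : ι → ℝ} {c : ℝ} (hp : ∀ j, 0 ≤ p j)
    (hpos : 0 < ∑ j, p j)
    (h : ∀ δ > 0, ∑ j, p j ^ (1 + δ) ≤ (∑ j, p j) * Real.exp (c * δ)) :
    ∑ j, p j * Real.log (p j) ≤ (∑ j, p j) * c := by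
  rw [← div_le_iff₀' hpos]
  refine le_of_forall_pos_one_add_mul_le_exp fun δ hδ => ?_
  rw [← mul_le_mul_iff_right₀ hpos]
  calc (∑ j, p j) * (1 + δ * ((∑ j, p j * Real.log (p j)) / ∑ j, p j))
      = ∑ j, (p j + δ * (p j * Real.log (p j))) := by
        rw [sum_add_distrib, ← mul_sum]; field_simp
    _ ≤ ∑ j, p j ^ (1 + δ) := sum_le_sum fun j _ => add_mul_mul_log_le_rpow (hp j) hδ.le
    _ ≤ _ := h δ hδ

theorem two_mul_sum_mul_sum_pow_three_sub_sq (p : ι → ℝ) :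
    2 * ((∑ j, p j) * ∑ j, p j ^ 3 - (∑ j, p j ^ 2) ^ 2) =
      ∑ i, ∑ j, p i * p j * (p i - p j) ^ 2 := by
  have hsymm : ∑ i, ∑ j, p i ^ 3 * p j = ∑ i, ∑ j, p i * p j ^ 3 := by
    rw [sum_comm]; simp_rw [mul_comm]
  have hexpand : ∑ i, ∑ j, p i * p j * (p i - p j) ^ 2 =
      ∑ i, ∑ j, p i ^ 3 * p j + ∑ i, ∑ j, p i * p j ^ 3 - 2 * ∑ i, ∑ j, p i ^ 2 * p j ^ 2 := by
    simp only [mul_sum, ← sum_add_distrib, ← sum_sub_distrib]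
    congr! 2; ring
  rw [hexpand, hsymm, sq (∑ j, p j ^ 2), sum_mul_sum, sum_mul_sum]
  ring

theorem eq_of_sum_mul_sum_pow_three_le {p : ι → ℝ} (hp : ∀ j, 0 ≤ p j)
    (h : (∑ j, p j) * ∑ j, p j ^ 3 ≤ (∑ j, p j ^ 2) ^ 2) {i j : ι}
    (hi : 0 < p i) (hj : 0 < p j) : p i = p j := by
  have hterm : ∀ i j, 0 ≤ p i * p j * (p i - p j) ^ 2 := fun i j =>
    mul_nonneg (mul_nonneg (hp i) (hp j)) (sq_nonneg _)
  have hzero : ∑ i, ∑ j, p i * p j * (p i - p j) ^ 2 = 0 :=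
    le_antisymm (by rw [← two_mul_sum_mul_sum_pow_three_sub_sq]; linarith)
      (sum_nonneg fun i _ => sum_nonneg fun j _ => hterm i j)
  have hij := (sum_eq_zero_iff_of_nonneg fun j _ => hterm i j).1
    ((sum_eq_zero_iff_of_nonneg fun i _ => sum_nonneg fun j _ => hterm i j).1 hzero i
      (mem_univ i)) j (mem_univ j)
  simpa [hi.ne', hj.ne', sub_eq_zero] using hij

theorem exists_finset_eq_indicator_of_sum_pow_le {p : ι → ℝ} {m r : ℝ} (hp : ∀ j, 0 ≤ p j)
    (hm : 0 < m) (h1 : ∑ j, p j = m) (h2 : ∑ j, p j ^ 2 = m * r) (h3 : ∑ j, p j ^ 3 ≤ m * r ^ 2) :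
    ∃ H : Finset ι, (H.card : ℝ) * r = m ∧ (∀ j ∈ H, p j = r) ∧ ∀ j ∉ H, p j = 0 := by
  classical
  have hflat : ∀ {i j}, 0 < p i → 0 < p j → p i = p j :=
    eq_of_sum_mul_sum_pow_three_le hp (by rw [h1, h2]; nlinarith)
  obtain ⟨j₀, -, hj₀⟩ : ∃ j ∈ univ, 0 < p j :=
    exists_lt_of_sum_lt (by rw [h1]; simpa using hm)
  set H := univ.filter (0 < p ·)
  have hon : ∀ j ∈ H, p j = p j₀ := fun j hj => hflat (mem_filter.1 hj).2 hj₀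
  have hoff : ∀ j ∉ H, p j = 0 := fun j hj =>
    le_antisymm (not_lt.1 fun h => hj (mem_filter.2 ⟨mem_univ j, h⟩)) (hp j)
  have hp_eq : p = fun j => if j ∈ H then p j₀ else 0 :=
    funext fun j => by split_ifs with hj; exacts [hon j hj, hoff j hj]
  rw [hp_eq] at h1 h2
  simp only [ite_pow, sum_ite_mem, univ_inter, sum_const, nsmul_eq_mul, zero_pow two_ne_zero]
    at h1 h2
  have hr : p j₀ = r := mul_left_cancel₀ hm.ne' (by linear_combination h2 - p j₀ * h1)
  exact ⟨H, hr ▸ h1, fun j hj => (hon j hj).trans hr, hoff⟩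

theorem card_inv_mul_sum_mul_log_eq {v : ι → ℝ} {α : ℝ} {H : Finset ι}
    (hm : (0 : ℝ) < Fintype.card ι)
    (hH : (H.card : ℝ) = (Fintype.card ι : ℝ) ^ (1 - α))
    (hon : ∀ j ∈ H, v j = (Fintype.card ι : ℝ) ^ α - 1) (hoff : ∀ j ∉ H, v j = -1) :
    (Fintype.card ι : ℝ)⁻¹ * ∑ j, (1 + v j) * Real.log (1 + v j) =
      α * Real.log (Fintype.card ι) := by
  classical
  have hterm : ∀ j, (1 + v j) * Real.log (1 + v j) =
      if j ∈ H then (Fintype.card ι : ℝ) ^ α * (α * Real.log (Fintype.card ι)) else 0 := by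
    intro j
    split_ifs with hj
    · rw [hon j hj, add_sub_cancel, Real.log_rpow hm]
    · simp [hoff j hj]
  rw [sum_congr rfl fun j _ => hterm j, sum_ite_mem, univ_inter, sum_const, nsmul_eq_mul, hH,
    ← mul_assoc ((Fintype.card ι : ℝ) ^ (1 - α)), ← Real.rpow_add hm, sub_add_cancel,
    Real.rpow_one]
  field_simp

section MW

variable {W : Set (ι → E)} {v : ι → ℝ}

theorem one_add_nonneg_of_mem_MW (hv : v ∈ MW W) (j : ι) : 0 ≤ 1 + v j := by
  linarith [hv.2.1 j]

theorem sum_one_add_of_mem_MW (hv : v ∈ MW W) : ∑ j, (1 + v j) = Fintype.card ι := by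
  simp [sum_add_distrib, hv.1]

theorem one_add_le_card_of_mem_MW (hv : v ∈ MW W) (j : ι) : 1 + v j ≤ Fintype.card ι :=
  sum_one_add_of_mem_MW hv ▸
    single_le_sum (fun i _ => one_add_nonneg_of_mem_MW hv i) (mem_univ j)

theorem sum_rpow_pos_of_mem_MW [Nonempty ι] (hv : v ∈ MW W) (s : ℝ) :
    0 < ∑ j, (1 + v j) ^ s := by
  obtain ⟨j, -, hj⟩ : ∃ j ∈ univ, (0 : ℝ) < 1 + v j :=
    exists_lt_of_sum_lt (by simp [sum_one_add_of_mem_MW hv, Fintype.card_pos])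
  exact sum_pos' (fun i _ => Real.rpow_nonneg (one_add_nonneg_of_mem_MW hv i) s)
    ⟨j, mem_univ j, Real.rpow_pos_of_pos hj s⟩

theorem kappaV_inv_of_mem_MW (hv : v ∈ MW W) {s : ℝ} (hs : s ≠ 0) :
    kappaV ι v s⁻¹ = s⁻¹ * Real.log ((Fintype.card ι : ℝ)⁻¹ * ∑ j, (1 + v j) ^ s) := by
  rw [kappaV, if_neg (inv_ne_zero hs), one_div, inv_inv]
  simp only [abs_of_nonneg (one_add_nonneg_of_mem_MW hv _)]

theorem kappaV_inv_le_log_card [Nonempty ι] (hv : v ∈ MW W) {s : ℝ} (hs : 0 < s) :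
    kappaV ι v s⁻¹ ≤ Real.log (Fintype.card ι) := by
  have hm : (0 : ℝ) < Fintype.card ι := Nat.cast_pos.2 Fintype.card_pos
  have hsum : ∑ j, (1 + v j) ^ s ≤ Fintype.card ι * (Fintype.card ι : ℝ) ^ s := by
    simpa using sum_le_sum fun j (_ : j ∈ univ) =>
      Real.rpow_le_rpow (one_add_nonneg_of_mem_MW hv j) (one_add_le_card_of_mem_MW hv j) hs.le
  rw [kappaV_inv_of_mem_MW hv hs.ne', inv_mul_le_iff₀ hs, ← Real.log_rpow hm]
  gcongr
  · exact mul_pos (inv_pos.2 hm) (sum_rpow_pos_of_mem_MW hv s)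
  · rwa [inv_mul_le_iff₀ hm]

theorem kappaV_le_kappa [Nonempty ι] (hv : v ∈ MW W) {θ : ℝ} (hθ : 0 < θ) :
    kappaV ι v θ ≤ kappa W θ := by
  refine le_csSup ⟨Real.log (Fintype.card ι), ?_⟩ ⟨v, hv, rfl⟩
  rintro _ ⟨w, hw, rfl⟩
  simpa using kappaV_inv_le_log_card hw (inv_pos.2 hθ)

end MW

section Geometric

variable {W : Set (ι → E)} {α : ℝ} {v : ι → ℝ}

theorem sum_rpow_le_of_geometric [Nonempty ι] (hW : GeometricOfOrder W α) (hv : v ∈ MW W)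
    {s : ℝ} (hs : 1 ≤ s) :
    ∑ j, (1 + v j) ^ s ≤ Fintype.card ι * (Fintype.card ι : ℝ) ^ (α * (s - 1)) := by
  have hs0 : 0 < s := by linarith
  have hm : (0 : ℝ) < Fintype.card ι := Nat.cast_pos.2 Fintype.card_pos
  have hκ := kappaV_le_kappa hv (inv_pos.2 hs0)
  rw [hW _ ⟨(inv_pos.2 hs0).le, inv_le_one_of_one_le₀ hs⟩, kappaV_inv_of_mem_MW hv hs0.ne',
    inv_mul_le_iff₀ hs0] at hκ
  rw [← inv_mul_le_iff₀ hm, ← Real.log_le_log_iff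
    (mul_pos (inv_pos.2 hm) (sum_rpow_pos_of_mem_MW hv s)) (by positivity), Real.log_rpow hm]
  refine hκ.trans_eq ?_
  rw [mul_one_sub, mul_sub, mul_comm s (_ * s⁻¹), mul_assoc, inv_mul_cancel₀ hs0.ne']
  ring

theorem sum_mul_log_le_of_geometric [Nonempty ι] (hW : GeometricOfOrder W α) (hv : v ∈ MW W) :
    (Fintype.card ι : ℝ)⁻¹ * ∑ j, (1 + v j) * Real.log (1 + v j) ≤
      α * Real.log (Fintype.card ι) := by
  have hm : (0 : ℝ) < Fintype.card ι := Nat.cast_pos.2 Fintype.card_pos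
  rw [inv_mul_le_iff₀ hm, ← sum_one_add_of_mem_MW hv]
  refine sum_mul_log_le_of_sum_rpow_le (one_add_nonneg_of_mem_MW hv)
    (by rwa [sum_one_add_of_mem_MW hv]) fun δ hδ => ?_
  rw [sum_one_add_of_mem_MW hv]
  convert sum_rpow_le_of_geometric hW hv (le_add_of_nonneg_right hδ.le) using 2
  rw [Real.rpow_def_of_pos hm]
  ring_nf

end Geometric

section Extremal

variable {E' : Type} [NormedAddCommGroup E'] [NormedSpace ℝ E'] (W : Submodule ℝ (ι → E'))

theorem mem_MW_iff_exists_norm_eq_one {v : ι → ℝ} :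
    v ∈ MW (W : Set (ι → E')) ↔
      (∑ j, v j = 0) ∧ (∀ j, -1 ≤ v j) ∧ ∃ a : E', ‖a‖ = 1 ∧ (fun j => v j • a) ∈ W := by
  refine and_congr_right' <| and_congr_right' ⟨?_, ?_⟩
  · rintro ⟨a, ha, hva⟩
    refine ⟨‖a‖⁻¹ • a, norm_smul_inv_norm ha, ?_⟩
    convert W.smul_mem ‖a‖⁻¹ hva using 1
    exact funext fun j => smul_comm _ _ _
  · rintro ⟨a, ha, hva⟩
    exact ⟨a, norm_ne_zero_iff.1 (ha ▸ one_ne_zero), hva⟩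

theorem isClosed_MW [FiniteDimensional ℝ E'] : IsClosed (MW (W : Set (ι → E'))) := by
  let S : Set ((ι → ℝ) × Metric.sphere (0 : E') 1) := {x | (fun j => x.1 j • (x.2 : E')) ∈ W}
  have hS : IsClosed S := W.closed_of_finiteDimensional.preimage (by fun_prop)
  have hMW : MW (W : Set (ι → E')) =
      {v | ∑ j, v j = 0} ∩ ((⋂ j, {v | -1 ≤ v j}) ∩ Prod.fst '' S) := by
    ext v
    simp [mem_MW_iff_exists_norm_eq_one, S]
  rw [hMW]
  exact (isClosed_eq (by fun_prop) continuous_const).inter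
    ((isClosed_iInter fun j => isClosed_le continuous_const (continuous_apply j)).inter
      (isClosedMap_fst_of_compactSpace _ hS))

theorem isCompact_MW [FiniteDimensional ℝ E'] : IsCompact (MW (W : Set (ι → E'))) :=
  (isCompact_univ_pi fun _ => isCompact_Icc (a := (-1 : ℝ)) (b := Fintype.card ι))
    |>.of_isClosed_subset (isClosed_MW W) fun v hv j _ =>
      ⟨hv.2.1 j, by linarith [one_add_le_card_of_mem_MW hv j]⟩

theorem zero_mem_MW [Nontrivial E'] : (0 : ι → ℝ) ∈ MW (W : Set (ι → E')) := by
  obtain ⟨a, ha⟩ := exists_ne (0 : E')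
  refine ⟨by simp, fun _ => by norm_num, a, ha, ?_⟩
  simp only [Pi.zero_apply, zero_smul]
  exact W.zero_mem

variable {W} {α : ℝ}

theorem exists_mem_MW_sum_sq_eq [Nonempty ι] [Nontrivial E'] [FiniteDimensional ℝ E']
    (hW : GeometricOfOrder (W : Set (ι → E')) α) :
    ∃ v ∈ MW (W : Set (ι → E')),
      ∑ j, (1 + v j) ^ 2 = Fintype.card ι * (Fintype.card ι : ℝ) ^ α := by
  have hm : (0 : ℝ) < Fintype.card ι := Nat.cast_pos.2 Fintype.card_pos
  obtain ⟨v, hv, hmax⟩ := (isCompact_MW W).exists_isMaxOn ⟨0, zero_mem_MW W⟩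
    (by fun_prop : Continuous fun u : ι → ℝ => ∑ j, (1 + u j) ^ 2).continuousOn
  refine ⟨v, hv, le_antisymm ?_ ?_⟩
  · have h := sum_rpow_le_of_geometric hW hv (s := 2) one_le_two
    norm_num [Real.rpow_two] at h
    exact h
  · have hκ : kappa (W : Set (ι → E')) 2⁻¹ ≤ kappaV ι v 2⁻¹ := by
      refine csSup_le ⟨_, v, hv, rfl⟩ ?_
      rintro _ ⟨w, hw, rfl⟩
      rw [kappaV_inv_of_mem_MW hw two_ne_zero, kappaV_inv_of_mem_MW hv two_ne_zero]
      gcongr ?_ * Real.log (_ * ?_)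
      · exact mul_pos (inv_pos.2 hm) (sum_rpow_pos_of_mem_MW hw 2)
      · simpa [Real.rpow_two] using hmax hw
    rw [hW _ ⟨by norm_num, by norm_num⟩, kappaV_inv_of_mem_MW hv two_ne_zero] at hκ
    have hpos := mul_pos (inv_pos.2 hm) (sum_rpow_pos_of_mem_MW hv 2)
    simp only [Real.rpow_two] at hκ hpos
    rw [← le_inv_mul_iff₀ hm, ← Real.log_le_log_iff (by positivity) hpos, Real.log_rpow hm]
    linarith

theorem exists_extremal_of_geometric [Nonempty ι] [Nontrivial E'] [FiniteDimensional ℝ E']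
    (hW : GeometricOfOrder (W : Set (ι → E')) α) :
    ∃ v ∈ MW (W : Set (ι → E')), ∃ H : Finset ι,
      (H.card : ℝ) = (Fintype.card ι : ℝ) ^ (1 - α) ∧
        (∀ j ∈ H, v j = (Fintype.card ι : ℝ) ^ α - 1) ∧ ∀ j ∉ H, v j = -1 := by
  have hm : (0 : ℝ) < Fintype.card ι := Nat.cast_pos.2 Fintype.card_pos
  obtain ⟨v, hv, hsq⟩ := exists_mem_MW_sum_sq_eq hW
  have hcube : ∑ j, (1 + v j) ^ 3 ≤ Fintype.card ι * ((Fintype.card ι : ℝ) ^ α) ^ 2 := by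
    have h := sum_rpow_le_of_geometric hW hv (s := 3) (by norm_num)
    rw [show α * (3 - 1) = α * 2 by norm_num, Real.rpow_mul hm.le, Real.rpow_two] at h
    simpa using h
  obtain ⟨H, hHr, hon, hoff⟩ := exists_finset_eq_indicator_of_sum_pow_le
    (one_add_nonneg_of_mem_MW hv) hm (sum_one_add_of_mem_MW hv) hsq hcube
  refine ⟨v, hv, H, ?_, fun j hj => ?_, fun j hj => ?_⟩
  · rw [Real.rpow_sub hm, Real.rpow_one, eq_div_iff (by positivity)]
    exact hHr
  · linarith [hon j hj]
  · linarith [hoff j hj]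

end Extremal

theorem statement7_general (m ℓ : ℕ) (hm : 2 ≤ m) (hℓ : 1 ≤ ℓ)
    (W : Submodule ℝ (Fin m → EuclideanSpace ℝ (Fin ℓ)))
    (α : ℝ)
    (hgeom : GeometricOfOrder (W : Set (Fin m → EuclideanSpace ℝ (Fin ℓ))) α) :
    (∀ v ∈ MW (W : Set (Fin m → EuclideanSpace ℝ (Fin ℓ))),
        (m : ℝ)⁻¹ * ∑ j, (1 + v j) * Real.log (1 + v j) ≤ α * Real.log m) ∧
      ∃ k : ℕ, 0 < k ∧ (k : ℝ) = (m : ℝ) ^ ((1 : ℝ) - α) ∧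
        ∃ v ∈ MW (W : Set (Fin m → EuclideanSpace ℝ (Fin ℓ))), ∃ H : Finset (Fin m),
          H.card = k ∧ (∀ j ∈ H, v j = (m : ℝ) ^ α - 1) ∧ (∀ j ∉ H, v j = -1) ∧
          (m : ℝ)⁻¹ * ∑ j, (1 + v j) * Real.log (1 + v j) = α * Real.log m := by
  have : Nonempty (Fin m) := ⟨⟨0, by omega⟩⟩
  have : Nonempty (Fin ℓ) := ⟨⟨0, by omega⟩⟩
  have hcard : (Fintype.card (Fin m) : ℝ) = m := by simp
  have hm₀ : (0 : ℝ) < Fintype.card (Fin m) := Nat.cast_pos.2 Fintype.card_pos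
  obtain ⟨v, hv, H, hH, hon, hoff⟩ := exists_extremal_of_geometric hgeom
  have hentropy := card_inv_mul_sum_mul_log_eq hm₀ hH hon hoff
  rw [hcard] at hH hon hentropy
  refine ⟨fun w hw => hcard ▸ sum_mul_log_le_of_geometric hgeom hw, H.card, ?_, hH,
    v, hv, H, rfl, hon, hoff, hentropy⟩
  exact_mod_cast hH ▸ Real.rpow_pos_of_pos (by positivity) _

/-- Proposition `GeometricStructure`: if `W` is geometric with
`α = -κ'(1)/log m`, then the entropy inequality holds on `𝕄^W`, `m^{1-α}` is a positive
integer, and there is an extremal `v ∈ 𝕄^W` attaining equality. -/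
theorem statement7 (m ℓ : ℕ) (hm : 2 ≤ m) (hℓ : 1 ≤ ℓ)
    (W : Submodule ℝ (Fin m → EuclideanSpace ℝ (Fin ℓ)))
    (hWV : ∀ w ∈ W, ∑ j, w j = 0)
    (α : ℝ)
    (hgeom : GeometricOfOrder (W : Set (Fin m → EuclideanSpace ℝ (Fin ℓ))) α) :
    (∀ v ∈ MW (W : Set (Fin m → EuclideanSpace ℝ (Fin ℓ))),
        (m : ℝ)⁻¹ * ∑ j, (1 + v j) * Real.log (1 + v j) ≤ α * Real.log m) ∧
      ∃ k : ℕ, 0 < k ∧ (k : ℝ) = (m : ℝ) ^ ((1 : ℝ) - α) ∧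
        ∃ v ∈ MW (W : Set (Fin m → EuclideanSpace ℝ (Fin ℓ))), ∃ H : Finset (Fin m),
          H.card = k ∧ (∀ j ∈ H, v j = (m : ℝ) ^ α - 1) ∧ (∀ j ∉ H, v j = -1) ∧
          (m : ℝ)⁻¹ * ∑ j, (1 + v j) * Real.log (1 + v j) = α * Real.log m :=
  statement7_general m ℓ hm hℓ W α hgeom

end TracePaper
end
end

section
/- Let W ⊆ V⊗ℝ^ℓ be a geometric space, let α = −κ′(1)/log m, and let φ: W → V be a linear operator. If the bilinear trace inequality holds for (W, φ, α) — namely, there is C such that ∫_𝕋 |𝕀_α[F]| dν ≤ C·(sup_{n≥0, ω∈𝒜ℱ_n} m^{(1−α)n} ν(ω))·‖F‖_{L¹} for every finite nonnegative Borel measure ν on 𝕋 and every simple martingale F ∈ 𝕎 — then φ is a canceling operator. -/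
open MeasureTheory Finset

noncomputable section

/-!
Write the extremal vector as `v ⊗ a`, so that `1 + v = m^α · 𝟙_H`. For every `N` the product
martingale `F_n = ∏_{i < min(n, N)} (1 + v(γ i)) • a` has all its differences in `ℝ · (v ⊗ a) ⊆ W`
and `‖F‖_{L¹} = ‖a‖`, while the product `ν` of uniform measures on `H` satisfies
`m^{(1-α)n} ν(ω) ≤ 1` because `|H| = m^{1-α}`. On the support `H^ℕ` of `ν` the weights `m^{-αn}`
cancel the density of `F` exactly, so `𝕀_α[F] = ∑_{n<N} φ(v ⊗ a)(γ n)` is a random walk with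
i.i.d. steps drawn uniformly from the values of `φ(v ⊗ a)` on `H`. The trace inequality bounds its
mean absolute value uniformly in `N`, and this forces every step to vanish.
-/

namespace TracePaper

theorem sum_pi_fin_succ {κ M : Type*} [Fintype κ] [AddCommMonoid M] (n : ℕ)
    (g : (Fin (n + 1) → κ) → M) :
    ∑ c, g c = ∑ c : Fin n → κ, ∑ j, g (Fin.snoc c j) := by
  rw [← (Fin.snocEquiv fun _ => κ).sum_comp, Fintype.sum_prod_type, Finset.sum_comm]
  rfl

theorem sum_mul_sq_pow_three_le {α : Type*} (s : Finset α) (w x : α → ℝ)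
    (hw : ∀ i ∈ s, 0 ≤ w i) :
    (∑ i ∈ s, w i * x i ^ 2) ^ 3 ≤ (∑ i ∈ s, w i * |x i|) ^ 2 * ∑ i ∈ s, w i * x i ^ 4 := by
  set M₁ := ∑ i ∈ s, w i * |x i|
  set M₂ := ∑ i ∈ s, w i * x i ^ 2
  set M₃ := ∑ i ∈ s, w i * |x i| ^ 3
  set M₄ := ∑ i ∈ s, w i * x i ^ 4
  have hM₂ : 0 ≤ M₂ := sum_nonneg fun i hi => mul_nonneg (hw i hi) (sq_nonneg _)
  have hM₄ : 0 ≤ M₄ := sum_nonneg fun i hi => mul_nonneg (hw i hi) (by positivity)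
  have cs₁ : M₂ ^ 2 ≤ M₁ * M₃ :=
    sum_sq_le_sum_mul_sum_of_sq_le_mul s (fun i hi => mul_nonneg (hw i hi) (abs_nonneg _))
      (fun i hi => mul_nonneg (hw i hi) (by positivity)) fun i _ => le_of_eq <| by
        rw [← even_two.pow_abs (x i)]; ring
  have cs₂ : M₃ ^ 2 ≤ M₂ * M₄ :=
    sum_sq_le_sum_mul_sum_of_sq_le_mul s (fun i hi => mul_nonneg (hw i hi) (sq_nonneg _))
      (fun i hi => mul_nonneg (hw i hi) (by positivity)) fun i _ => le_of_eq <| by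
        rw [← even_two.pow_abs (x i), ← (by decide : Even 4).pow_abs (x i)]; ring
  rcases hM₂.eq_or_lt with h | h
  · rw [← h, zero_pow three_ne_zero]
    exact mul_nonneg (sq_nonneg _) hM₄
  · have : M₂ * M₂ ^ 3 ≤ M₂ * (M₁ ^ 2 * M₄) := by
      calc M₂ * M₂ ^ 3 = (M₂ ^ 2) ^ 2 := by ring
        _ ≤ (M₁ * M₃) ^ 2 := pow_le_pow_left₀ (sq_nonneg _) cs₁ 2
        _ = M₁ ^ 2 * M₃ ^ 2 := by ring
        _ ≤ M₁ ^ 2 * (M₂ * M₄) := mul_le_mul_of_nonneg_left cs₂ (sq_nonneg _)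
        _ = M₂ * (M₁ ^ 2 * M₄) := by ring
    exact le_of_mul_le_mul_left this h

theorem nonpos_of_forall_natCast_mul_le {x y : ℝ} (h : ∀ N : ℕ, N * x ≤ y) : x ≤ 0 := by
  by_contra! hx
  obtain ⟨N, hN⟩ := exists_nat_gt (y / x)
  linarith [(div_lt_iff₀ hx).1 hN, h N]

section RandomWalk

variable {κ : Type*} [Fintype κ] (p t : κ → ℝ)

/-- `𝔼 f(t(X₁) + ⋯ + t(X_N))` for independent `X₁, …, X_N` with law `p`. -/
def walkExp (f : ℝ → ℝ) (N : ℕ) : ℝ :=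
  ∑ c : Fin N → κ, (∏ i, p (c i)) * f (∑ i, t (c i))

theorem walkExp_succ (f : ℝ → ℝ) (N : ℕ) :
    walkExp p t f (N + 1) = walkExp p t (fun x => ∑ j, p j * f (x + t j)) N := by
  simp only [walkExp, sum_pi_fin_succ N, Fin.prod_univ_castSucc, Fin.sum_univ_castSucc,
    Fin.snoc_castSucc, Fin.snoc_last, mul_sum, mul_assoc]

theorem walkExp_add (f g : ℝ → ℝ) (N : ℕ) :
    walkExp p t (fun x => f x + g x) N = walkExp p t f N + walkExp p t g N := by
  simp only [walkExp, mul_add, sum_add_distrib]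

theorem walkExp_const_mul (r : ℝ) (f : ℝ → ℝ) (N : ℕ) :
    walkExp p t (fun x => r * f x) N = r * walkExp p t f N := by
  simp only [walkExp, mul_sum, mul_left_comm r]

variable {p}

theorem walkExp_const (hp : ∑ j, p j = 1) (r : ℝ) (N : ℕ) :
    walkExp p t (fun _ => r) N = r := by
  rw [walkExp, ← sum_mul, ← Fintype.prod_sum, hp, prod_const_one, one_mul]

theorem walkExp_nonneg (hp : ∀ j, 0 ≤ p j) {f : ℝ → ℝ} (hf : ∀ x, 0 ≤ f x) (N : ℕ) :
    0 ≤ walkExp p t f N :=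
  sum_nonneg fun _ _ => mul_nonneg (prod_nonneg fun _ _ => hp _) (hf _)

theorem abs_walkExp_le (hp : ∀ j, 0 ≤ p j) (f : ℝ → ℝ) (N : ℕ) :
    |walkExp p t f N| ≤ walkExp p t (fun x => |f x|) N := by
  refine (abs_sum_le_sum_abs _ _).trans_eq (sum_congr rfl fun c _ => ?_)
  rw [abs_mul, abs_of_nonneg (prod_nonneg fun i _ => hp _)]

theorem walkExp_id (hp : ∑ j, p j = 1) (N : ℕ) :
    walkExp p t (fun x => x) N = N * ∑ j, p j * t j := by
  induction N with
  | zero => simp [walkExp]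
  | succ N ih =>
    have step (x : ℝ) : ∑ j, p j * (x + t j) = x + ∑ j, p j * t j := by
      simp only [mul_add, sum_add_distrib, ← sum_mul, hp, one_mul]
    simp only [walkExp_succ, step, walkExp_add, ih, walkExp_const t hp]
    push_cast; ring

theorem walkExp_sq (hp : ∑ j, p j = 1) (ht : ∑ j, p j * t j = 0) (N : ℕ) :
    walkExp p t (fun x => x ^ 2) N = N * ∑ j, p j * t j ^ 2 := by
  induction N with
  | zero => simp [walkExp]
  | succ N ih =>
    have step (x : ℝ) : ∑ j, p j * (x + t j) ^ 2 = x ^ 2 + ∑ j, p j * t j ^ 2 := by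
      have e (j : κ) :
          p j * (x + t j) ^ 2 = x ^ 2 * p j + 2 * x * (p j * t j) + p j * t j ^ 2 := by ring
      simp only [e, sum_add_distrib, ← mul_sum, hp, ht]; ring
    simp only [walkExp_succ, step, walkExp_add, ih, walkExp_const t hp]
    push_cast; ring

theorem walkExp_pow_four (hp : ∑ j, p j = 1) (ht : ∑ j, p j * t j = 0) (N : ℕ) :
    walkExp p t (fun x => x ^ 4) N
      = 3 * N * (N - 1) * (∑ j, p j * t j ^ 2) ^ 2 + N * ∑ j, p j * t j ^ 4 := by
  induction N with
  | zero => simp [walkExp]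
  | succ N ih =>
    have step (x : ℝ) : ∑ j, p j * (x + t j) ^ 4 = x ^ 4 + 6 * (∑ j, p j * t j ^ 2) * x ^ 2
        + 4 * (∑ j, p j * t j ^ 3) * x + ∑ j, p j * t j ^ 4 := by
      have e (j : κ) : p j * (x + t j) ^ 4 = x ^ 4 * p j + 4 * x ^ 3 * (p j * t j)
          + 6 * x ^ 2 * (p j * t j ^ 2) + 4 * x * (p j * t j ^ 3) + p j * t j ^ 4 := by ring
      simp only [e, sum_add_distrib, ← mul_sum, hp, ht]; ring
    have odd : walkExp p t (fun x => 4 * (∑ j, p j * t j ^ 3) * x) N = 0 := by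
      rw [walkExp_const_mul, walkExp_id t hp, ht, mul_zero, mul_zero]
    simp only [walkExp_succ, step, walkExp_add, walkExp_const_mul, ih, walkExp_sq t hp ht, odd,
      walkExp_const t hp]
    push_cast; ring

variable {t}

/-- A random walk whose mean displacement stays bounded does not move: for `t ≢ 0` on the
support of `p`, either the drift makes `𝔼 |S_N|` grow linearly, or, in the centred case,
Hölder's inequality `(𝔼 S_N²)³ ≤ (𝔼 |S_N|)² 𝔼 S_N⁴` makes it grow like `√N`. -/
theorem eq_zero_of_walkExp_abs_le (hp₀ : ∀ j, 0 ≤ p j) (hp : ∑ j, p j = 1) {B : ℝ}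
    (hB : ∀ N, walkExp p t (fun x => |x|) N ≤ B) {k : κ} (hk : p k ≠ 0) : t k = 0 := by
  have mean_zero : ∑ j, p j * t j = 0 := by
    refine abs_nonpos_iff.1 (nonpos_of_forall_natCast_mul_le (y := B) fun N => ?_)
    calc (N : ℝ) * |∑ j, p j * t j| = |walkExp p t (fun x => x) N| := by
          rw [walkExp_id t hp, abs_mul, Nat.abs_cast]
      _ ≤ B := (abs_walkExp_le t hp₀ _ N).trans (hB N)
  set σ₂ := ∑ j, p j * t j ^ 2
  set σ₄ := ∑ j, p j * t j ^ 4
  have hσ₂ : 0 ≤ σ₂ := sum_nonneg fun j _ => mul_nonneg (hp₀ j) (sq_nonneg _)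
  have hσ₄ : 0 ≤ σ₄ := sum_nonneg fun j _ => mul_nonneg (hp₀ j) (by positivity)
  have hB₀ : 0 ≤ B := (walkExp_nonneg t hp₀ (fun x => abs_nonneg x) 0).trans (hB 0)
  have variance_zero : σ₂ = 0 := by
    have holder (N : ℕ) : ((N : ℝ) * σ₂) ^ 3 ≤ B ^ 2 * (3 * N * (N - 1) * σ₂ ^ 2 + N * σ₄) := by
      rw [← walkExp_sq t hp mean_zero, ← walkExp_pow_four t hp mean_zero]
      refine (sum_mul_sq_pow_three_le _ _ _ fun c _ => prod_nonneg fun i _ => hp₀ _).trans ?_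
      gcongr
      exacts [walkExp_nonneg t hp₀ (fun x => (by decide : Even 4).pow_nonneg x) N,
        walkExp_nonneg t hp₀ (fun x => abs_nonneg x) N, hB N, le_rfl]
    have growth (N : ℕ) : N * σ₂ ^ 3 ≤ B ^ 2 * (3 * σ₂ ^ 2 + σ₄) := by
      rcases N.eq_zero_or_pos with rfl | hN
      · simp only [CharP.cast_eq_zero, zero_mul]; positivity
      have hN : (1 : ℝ) ≤ N := by exact_mod_cast hN
      refine le_of_mul_le_mul_left ?_ (by positivity : (0 : ℝ) < N ^ 2)
      calc (N : ℝ) ^ 2 * (N * σ₂ ^ 3) = (N * σ₂) ^ 3 := by ring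
        _ ≤ B ^ 2 * (3 * N * (N - 1) * σ₂ ^ 2 + N * σ₄) := holder N
        _ ≤ B ^ 2 * (3 * N * N * σ₂ ^ 2 + N * N * σ₄) := by gcongr <;> nlinarith
        _ = N ^ 2 * (B ^ 2 * (3 * σ₂ ^ 2 + σ₄)) := by ring
    exact pow_eq_zero_iff three_ne_zero |>.1
      (le_antisymm (nonpos_of_forall_natCast_mul_le growth) (by positivity))
  have := (sum_eq_zero_iff_of_nonneg fun j _ => mul_nonneg (hp₀ j) (sq_nonneg (t j))).1
    variance_zero k (mem_univ k)
  simpa [hk] using this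

end RandomWalk

section ProductMartingale

variable {ι : Type} {E : Type} [AddCommGroup E] [Module ℝ E]

def prodDensity (v : ι → ℝ) (N n : ℕ) (c : Fin n → ι) : ℝ :=
  ∏ i : Fin n, if (i : ℕ) < N then 1 + v (c i) else 1

theorem prodDensity_snoc (v : ι → ℝ) (N n : ℕ) (c : Fin n → ι) (j : ι) :
    prodDensity v N (n + 1) (Fin.snoc c j)
      = prodDensity v N n c * if n < N then 1 + v j else 1 := by
  simp [prodDensity, Fin.prod_univ_castSucc]

theorem prodDensity_nonneg {v : ι → ℝ} (hv : ∀ j, -1 ≤ v j) (N n : ℕ) (c : Fin n → ι) :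
    0 ≤ prodDensity v N n c :=
  prod_nonneg fun i _ => by split_ifs <;> linarith [hv (c i)]

variable [Fintype ι]

theorem sum_prodDensity_snoc {v : ι → ℝ} (hv : ∑ j, v j = 0) (N n : ℕ) (c : Fin n → ι) :
    ∑ j, prodDensity v N (n + 1) (Fin.snoc c j) = Fintype.card ι * prodDensity v N n c := by
  simp only [prodDensity_snoc, ← mul_sum]
  split_ifs <;> simp [sum_add_distrib, hv, mul_comm]

theorem sum_prodDensity {v : ι → ℝ} (hv : ∑ j, v j = 0) (N n : ℕ) :
    ∑ c : Fin n → ι, prodDensity v N n c = (Fintype.card ι : ℝ) ^ n := by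
  induction n with
  | zero => simp [prodDensity]
  | succ n ih => simp only [sum_pi_fin_succ n, sum_prodDensity_snoc hv, ← mul_sum, ih, pow_succ']

variable [Nonempty ι]

def prodMart (v : ι → ℝ) (hv : ∑ j, v j = 0) (a : E) (N : ℕ) : Mart ι E where
  val n c := prodDensity v N n c • a
  avg_eq n c := by
    rw [← sum_smul, sum_prodDensity_snoc hv, smul_smul,
      inv_mul_cancel_left₀ (Nat.cast_ne_zero.2 Fintype.card_ne_zero)]

variable {v : ι → ℝ} (hv : ∑ j, v j = 0) (N : ℕ)

theorem diff_prodMart (a : E) (n : ℕ) (c : Fin n → ι) :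
    diff (prodMart v hv a N) n c
      = if n < N then prodDensity v N n c • fun j => v j • a else 0 := by
  ext j
  simp only [diff, prodMart, prodDensity_snoc]
  split_ifs <;> simp [mul_add, add_smul, smul_smul]

theorem memSpace_prodMart (a : E) {W : Submodule ℝ (ι → E)} (hw : (fun j => v j • a) ∈ W) :
    MemSpace (W : Set (ι → E)) (prodMart v hv a N) := fun n c => by
  rw [diff_prodMart]
  split_ifs
  exacts [W.smul_mem _ hw, W.zero_mem]

theorem simple_prodMart (a : E) : Simple (prodMart v hv a N) :=
  ⟨N, fun n hn c => by rw [diff_prodMart, if_neg hn.not_gt]⟩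

theorem Ialpha_prodMart (a : E) (φ : (ι → E) →ₗ[ℝ] (ι → ℝ)) (α : ℝ) {γ : ℕ → ι}
    (hγ : ∀ i < N, 1 + v (γ i) = (Fintype.card ι : ℝ) ^ α) :
    Ialpha (fun w => φ w) α (prodMart v hv a N) γ = ∑ i : Fin N, φ (fun j => v j • a) (γ i) := by
  have hK : (0 : ℝ) < Fintype.card ι := Nat.cast_pos.2 Fintype.card_pos
  have density (n : ℕ) (hn : n < N) :
      prodDensity v N n (fun i => γ i) = ((Fintype.card ι : ℝ) ^ α) ^ n := by
    rw [prodDensity, prod_congr rfl fun (i : Fin n) _ => by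
      rw [if_pos (i.2.trans hn), hγ i (i.2.trans hn)], prod_const, card_univ, Fintype.card_fin]
  have term (n : ℕ) : (Fintype.card ι : ℝ) ^ (-(α * n)) *
      φ (diff (prodMart v hv a N) n fun i : Fin n => γ i) (γ n)
        = if n < N then φ (fun j => v j • a) (γ n) else 0 := by
    rw [diff_prodMart]
    split_ifs with hn
    · rw [map_smul, Pi.smul_apply, smul_eq_mul, density n hn, ← mul_assoc,
        ← Real.rpow_natCast, ← Real.rpow_mul hK.le, ← Real.rpow_add hK, neg_add_cancel,
        Real.rpow_zero, one_mul]
    · rw [map_zero, Pi.zero_apply, mul_zero]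
  rw [Ialpha, tsum_congr term, tsum_eq_sum (s := range N) fun n hn => if_neg (by simpa using hn),
    ← Fin.sum_univ_eq_sum_range]
  exact sum_congr rfl fun i _ => if_pos i.2

theorem L1Norm_prodMart {E' : Type} [NormedAddCommGroup E'] [NormedSpace ℝ E'] (a : E')
    (hv₁ : ∀ j, -1 ≤ v j) : L1Norm (prodMart v hv a N) = ‖a‖ := by
  have (n : ℕ) :
      ((Fintype.card ι : ℝ) ^ n)⁻¹ * ∑ c : Fin n → ι, ‖prodDensity v N n c • a‖ = ‖a‖ := by
    simp only [norm_smul, Real.norm_of_nonneg (prodDensity_nonneg hv₁ N n _), ← sum_mul,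
      sum_prodDensity hv]
    exact inv_mul_cancel_left₀ (pow_ne_zero n (Nat.cast_ne_zero.2 Fintype.card_ne_zero)) _
  simp only [L1Norm, prodMart, this, ciSup_const]

end ProductMartingale

section TreeMeasure

theorem restrictFin_preimage_singleton {ι : Type} (N : ℕ) (c : Fin N → ι) :
    (fun (γ : ℕ → ι) (i : Fin N) => γ i) ⁻¹' {c} = cyl N c := by
  ext γ
  simp [cyl, funext_iff]

variable {ι : Type} [MeasurableSpace ι]

theorem ae_infinitePi_mem (μ₀ : Measure ι) [IsProbabilityMeasure μ₀] {s : Set ι}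
    (hs : μ₀ sᶜ = 0) :
    ∀ᵐ γ ∂Measure.infinitePi (fun _ : ℕ => μ₀), ∀ i, γ i ∈ s := by
  refine ae_all_iff.2 fun i => ?_
  have := (measurePreserving_eval_infinitePi (fun _ => μ₀) i).quasiMeasurePreserving
  exact this.ae (ae_iff.2 hs)

variable [MeasurableSingletonClass ι]

theorem integral_comp_restrictFin [Fintype ι] (ν : Measure (ℕ → ι)) [IsFiniteMeasure ν] {N : ℕ}
    (f : (Fin N → ι) → ℝ) :
    ∫ γ, f (fun i => γ i) ∂ν = ∑ c, (ν (cyl N c)).toReal * f c := by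
  have hπ : Measurable fun (γ : ℕ → ι) (i : Fin N) => γ i := by fun_prop
  rw [← integral_map hπ.aemeasurable (measurable_of_countable f).aestronglyMeasurable,
    integral_fintype .of_finite]
  refine sum_congr rfl fun c _ => ?_
  rw [measureReal_def, Measure.map_apply hπ (measurableSet_singleton c),
    restrictFin_preimage_singleton, smul_eq_mul]

theorem infinitePi_cyl (μ₀ : Measure ι) [IsProbabilityMeasure μ₀] (n : ℕ) (c : Fin n → ι) :
    Measure.infinitePi (fun _ => μ₀) (cyl n c) = ∏ i, μ₀ {c i} := by
  classical
  have : cyl n c =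
      Set.pi (range n : Set ℕ) fun k => if h : k < n then {c ⟨k, h⟩} else Set.univ := by
    ext γ
    simp only [cyl, Set.mem_ofPred_eq, Set.mem_pi, coe_range, Set.mem_Iio, Fin.forall_iff]
    exact forall₂_congr fun k hk => by simp [hk]
  rw [this, Measure.infinitePi_pi _ fun k _ => by split_ifs <;> simp, prod_range]
  exact prod_congr rfl fun i _ => by rw [dif_pos i.2]

end TreeMeasure

section Extremal

variable {ι : Type} [Fintype ι]

open Classical in
def extremalProfile (α : ℝ) (H : Finset ι) (j : ι) : ℝ :=
  if j ∈ H then (Fintype.card ι : ℝ) ^ α - 1 else -1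

theorem IsExtremal.eq_smul {E : Type} [AddCommGroup E] [Module ℝ E] {W : Set (ι → E)} {α : ℝ}
    {w : ι → E} {H : Finset ι} (hw : IsExtremal W α w H) :
    ∃ a : E, w = fun j => extremalProfile α H j • a := by
  obtain ⟨-, a, -, -, hH, hHc⟩ := hw
  refine ⟨a, funext fun j => ?_⟩
  by_cases hj : j ∈ H
  · simp [extremalProfile, hj, hH]
  · simp [extremalProfile, hj, hHc]

theorem sum_extremalProfile [Nonempty ι] {α : ℝ} {H : Finset ι}
    (hH : (H.card : ℝ) = (Fintype.card ι : ℝ) ^ ((1 : ℝ) - α)) :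
    ∑ j, extremalProfile α H j = 0 := by
  classical
  have hK : (0 : ℝ) < Fintype.card ι := Nat.cast_pos.2 Fintype.card_pos
  have hHα : (H.card : ℝ) * (Fintype.card ι : ℝ) ^ α = Fintype.card ι := by
    rw [hH, ← Real.rpow_add hK, sub_add_cancel, Real.rpow_one]
  have (j : ι) :
      extremalProfile α H j = (if j ∈ H then (Fintype.card ι : ℝ) ^ α else 0) - 1 := by
    unfold extremalProfile; split_ifs <;> ring
  simp only [this, sum_sub_distrib, sum_ite_mem, univ_inter, sum_const, card_univ, nsmul_eq_mul,
    mul_one, hHα, sub_self]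

theorem neg_one_le_extremalProfile (α : ℝ) (H : Finset ι) (j : ι) :
    -1 ≤ extremalProfile α H j := by
  unfold extremalProfile
  split_ifs <;> linarith [Real.rpow_nonneg (Nat.cast_nonneg (Fintype.card ι)) α]

theorem one_add_extremalProfile_of_mem (α : ℝ) {H : Finset ι} {j : ι} (hj : j ∈ H) :
    1 + extremalProfile α H j = (Fintype.card ι : ℝ) ^ α := by
  simp [extremalProfile, hj]

end Extremal

section UniformProduct

variable {ι : Type}

open Classical in
def uniformWeight (H : Finset ι) (j : ι) : ℝ :=
  if j ∈ H then (H.card : ℝ)⁻¹ else 0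

theorem uniformWeight_nonneg (H : Finset ι) (j : ι) : 0 ≤ uniformWeight H j := by
  unfold uniformWeight; split_ifs <;> positivity

theorem uniformWeight_le (H : Finset ι) (j : ι) : uniformWeight H j ≤ (H.card : ℝ)⁻¹ := by
  unfold uniformWeight; split_ifs <;> [exact le_rfl; positivity]

theorem uniformWeight_of_mem {H : Finset ι} {j : ι} (hj : j ∈ H) :
    uniformWeight H j = (H.card : ℝ)⁻¹ := by
  simp [uniformWeight, hj]

theorem sum_uniformWeight [Fintype ι] {H : Finset ι} (hH : H.Nonempty) :
    ∑ j, uniformWeight H j = 1 := by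
  classical
  simp only [uniformWeight, sum_ite_mem, univ_inter, sum_const, nsmul_eq_mul]
  exact mul_inv_cancel₀ (Nat.cast_ne_zero.2 hH.card_ne_zero)

variable [MeasurableSpace ι] [MeasurableSingletonClass ι] {H : Finset ι} (hH : H.Nonempty)

theorem toReal_uniformOfFinset_singleton (j : ι) :
    ((PMF.uniformOfFinset H hH).toMeasure {j}).toReal = uniformWeight H j := by
  classical
  rw [PMF.toMeasure_apply_singleton _ _ (measurableSet_singleton j), PMF.uniformOfFinset_apply,
    uniformWeight]
  split_ifs <;> simp

theorem toReal_infinitePi_uniformOfFinset_cyl (n : ℕ) (c : Fin n → ι) :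
    (Measure.infinitePi (fun _ : ℕ => (PMF.uniformOfFinset H hH).toMeasure) (cyl n c)).toReal
      = ∏ i, uniformWeight H (c i) := by
  simp only [infinitePi_cyl, ENNReal.toReal_prod, toReal_uniformOfFinset_singleton]

theorem rpow_mul_toReal_infinitePi_uniformOfFinset_cyl_le [Fintype ι] {α : ℝ}
    (hcard : (H.card : ℝ) = (Fintype.card ι : ℝ) ^ ((1 : ℝ) - α)) (n : ℕ) (c : Fin n → ι) :
    (Fintype.card ι : ℝ) ^ (((1 : ℝ) - α) * n)
      * (Measure.infinitePi (fun _ : ℕ => (PMF.uniformOfFinset H hH).toMeasure) (cyl n c)).toReal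
      ≤ 1 := by
  have hH₀ : (0 : ℝ) < H.card := Nat.cast_pos.2 hH.card_pos
  rw [toReal_infinitePi_uniformOfFinset_cyl, Real.rpow_mul (Nat.cast_nonneg _), Real.rpow_natCast,
    ← hcard]
  calc (H.card : ℝ) ^ n * ∏ i, uniformWeight H (c i)
      ≤ H.card ^ n * ∏ _i : Fin n, (H.card : ℝ)⁻¹ := by
        gcongr with i
        exacts [fun i _ => uniformWeight_nonneg H _, uniformWeight_le H _]
    _ = 1 := by
        rw [prod_const, card_univ, Fintype.card_fin, ← mul_pow, mul_inv_cancel₀ hH₀.ne', one_pow]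

theorem integral_abs_Ialpha_prodMart_extremalProfile [Fintype ι] [Nonempty ι] {E : Type}
    [AddCommGroup E] [Module ℝ E] {α : ℝ} (hv : ∑ j, extremalProfile α H j = 0) (a : E)
    (φ : (ι → E) →ₗ[ℝ] (ι → ℝ)) (N : ℕ) :
    ∫ γ, |Ialpha (fun w => φ w) α (prodMart (extremalProfile α H) hv a N) γ|
        ∂Measure.infinitePi (fun _ : ℕ => (PMF.uniformOfFinset H hH).toMeasure)
      = walkExp (uniformWeight H) (φ fun j => extremalProfile α H j • a) (fun x => |x|) N := by
  have concentrated :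
      ∀ᵐ γ ∂Measure.infinitePi (fun _ : ℕ => (PMF.uniformOfFinset H hH).toMeasure),
        ∀ i, γ i ∈ H := by
    refine ae_infinitePi_mem _ ?_
    rw [PMF.toMeasure_apply_eq_zero_iff _ H.measurableSet.compl, PMF.support_uniformOfFinset]
    exact disjoint_compl_right
  rw [integral_congr_ae (concentrated.mono fun γ hγ => congrArg abs <|
      Ialpha_prodMart hv N a φ α fun i _ => one_add_extremalProfile_of_mem α (hγ i)),
    integral_comp_restrictFin _ fun c => |∑ i, φ (fun j => extremalProfile α H j • a) (c i)|]
  simp only [toReal_infinitePi_uniformOfFinset_cyl, walkExp]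

end UniformProduct

theorem TraceIneq.canceling {ι : Type} [Fintype ι] {E : Type} [NormedAddCommGroup E]
    [NormedSpace ℝ E] {W : Submodule ℝ (ι → E)} {φ : (ι → E) →ₗ[ℝ] (ι → ℝ)} {α : ℝ}
    (h : TraceIneq (W : Set (ι → E)) (fun w => φ w) α) :
    Canceling (W : Set (ι → E)) α (fun w => φ w) := by
  rintro w H hw k hk
  have : Nonempty ι := ⟨k⟩
  -- The product of discrete σ-algebras is `treeMS ι` only up to unfolding, hence the explicit
  -- `hν` and the `calc` below in place of instance search and rewriting.
  let : MeasurableSpace ι := ⊤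
  have : MeasurableSingletonClass ι := ⟨fun _ => trivial⟩
  obtain ⟨C, hC⟩ := h
  obtain ⟨hwW, -, -, hcard, -⟩ := id hw
  obtain ⟨a, rfl⟩ := hw.eq_smul
  have hH : H.Nonempty := ⟨k, hk⟩
  have hv := sum_extremalProfile hcard
  refine eq_zero_of_walkExp_abs_le (uniformWeight_nonneg H) (sum_uniformWeight hH)
    (B := C * ‖a‖) (fun N => ?_) (by simp [uniformWeight_of_mem hk, hH.card_ne_zero])
  have hν : IsFiniteMeasure
      (Measure.infinitePi fun _ : ℕ => (PMF.uniformOfFinset H hH).toMeasure) := inferInstance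
  calc walkExp (uniformWeight H) (φ fun j => extremalProfile α H j • a) (fun x => |x|) N
      = ∫ γ, |Ialpha (fun w => φ w) α (prodMart (extremalProfile α H) hv a N) γ|
          ∂Measure.infinitePi (fun _ : ℕ => (PMF.uniformOfFinset H hH).toMeasure) :=
        (integral_abs_Ialpha_prodMart_extremalProfile hH hv a φ N).symm
    _ ≤ C * 1 * L1Norm (prodMart (extremalProfile α H) hv a N) :=
        hC _ hν _ (memSpace_prodMart hv N a hwW) (simple_prodMart hv N a) 1
          (rpow_mul_toReal_infinitePi_uniformOfFinset_cyl_le hH hcard)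
    _ = C * ‖a‖ := by rw [L1Norm_prodMart hv N a (neg_one_le_extremalProfile α H), mul_one]

theorem statement8_general (m ℓ : ℕ)
    (W : Submodule ℝ (Fin m → EuclideanSpace ℝ (Fin ℓ)))
    (φ : (Fin m → EuclideanSpace ℝ (Fin ℓ)) →ₗ[ℝ] (Fin m → ℝ))
    (α : ℝ)
    (htrace : TraceIneq (W : Set (Fin m → EuclideanSpace ℝ (Fin ℓ))) (fun w => φ w) α) :
    Canceling (W : Set (Fin m → EuclideanSpace ℝ (Fin ℓ))) α (fun w => φ w) :=
  TraceIneq.canceling htrace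

/-- if `W` is geometric, `α = -κ'(1)/log m`, and the bilinear trace inequality
holds at the endpoint, then `φ` is a canceling operator. -/
theorem statement8 (m ℓ : ℕ) (hm : 2 ≤ m) (hℓ : 1 ≤ ℓ)
    (W : Submodule ℝ (Fin m → EuclideanSpace ℝ (Fin ℓ)))
    (hWV : ∀ w ∈ W, ∑ j, w j = 0)
    (φ : (Fin m → EuclideanSpace ℝ (Fin ℓ)) →ₗ[ℝ] (Fin m → ℝ))
    (hφV : ∀ w ∈ W, ∑ j, φ w j = 0)
    (α : ℝ) (hα : α ∈ Set.Ioo (0 : ℝ) 1)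
    (hgeom : GeometricOfOrder (W : Set (Fin m → EuclideanSpace ℝ (Fin ℓ))) α)
    (htrace : TraceIneq (W : Set (Fin m → EuclideanSpace ℝ (Fin ℓ))) (fun w => φ w) α) :
    Canceling (W : Set (Fin m → EuclideanSpace ℝ (Fin ℓ))) α (fun w => φ w) :=
  statement8_general m ℓ W φ α htrace

end TracePaper
end
end

section
/- Let α ∈ (0,1), let W ⊆ V⊗ℝ^ℓ be a linear subspace, and let φ: W → V be linear. Suppose there exist a finite function G: Ω_B → ℝ and a constant C₀ such that G satisfies the main inequality, the boundary inequality, and G(x,0,z,t,s) ≤ C₀·z·s for all (x,0,z,t,s) ∈ Ω_B. Then the bilinear trace inequality holds: there is a constant C (depending only on C₀) such that ∫_𝕋 |𝕀_α[F]| dν ≤ C·(sup_{n≥0, ω∈𝒜ℱ_n} m^{(1−α)n} ν(ω))·‖F‖_{L¹} for every finite nonnegative Borel measure ν on 𝕋 and every simple martingale F ∈ 𝕎. -/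
/-!
Run the Bellman function along the tree. On an atom `ω ∈ 𝒜ℱ_n` evaluate `G` at
`(F_n, y_n, z_n, ν(ω), s_n)`, where `y_n` is the partial sum of `𝕀_α[F]` rescaled by
`m^{α(n-1)}`, `z_n` is the martingale generated by `|F_N|`, and `s_n` is built from level `N`
downwards. The main inequality makes the potential `m^{-αn} ∑_ω G(…)` nonincreasing in `n`. At the
level `N` beyond which `F` is constant, the boundary inequality bounds the potential from below by
`m^{-α} ∫ |𝕀_α[F]| dν`. At level `0` we have `y_0 = 0`, `z_0 = 𝔼|F_N| ≤ ‖F‖_{L¹}` and `s_0 ≤ A`,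
so the hypothesis `G(x,0,z,t,s) ≤ C₀ z s` bounds it from above by `|C₀| ‖F‖_{L¹} A`.
-/

open MeasureTheory Finset

noncomputable section

namespace TracePaper

variable {ι : Type} [Fintype ι]
variable {E : Type} [AddCommGroup E] [Module ℝ E]

theorem sum_fun_fin_succ {α M : Type*} [Fintype α] [AddCommMonoid M] {n : ℕ}
    (g : (Fin (n + 1) → α) → M) :
    ∑ d, g d = ∑ c : Fin n → α, ∑ j, g (Fin.snoc c j) := by
  rw [← (Fin.snocEquiv fun _ => α).sum_comp, Fintype.sum_prod_type, Finset.sum_comm]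
  rfl

theorem measurableSet_cyl {α : Type} (n : ℕ) (c : Fin n → α) :
    MeasurableSet[treeMS α] (cyl n c) := by
  let _ : MeasurableSpace α := ⊤
  have h : cyl n c = ⋂ i : Fin n, (fun γ : ℕ → α => γ i) ⁻¹' {c i} := by
    ext γ; simp [cyl]
  rw [h]
  exact .iInter fun i => measurable_pi_apply (i : ℕ) trivial

theorem cyl_eq_iUnion_snoc {α : Type} (n : ℕ) (c : Fin n → α) :
    cyl n c = ⋃ j, cyl (n + 1) (Fin.snoc c j) := by
  ext γ
  simp only [Set.mem_iUnion, cyl, Set.mem_ofPred_eq, Fin.forall_fin_succ', Fin.snoc_castSucc,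
    Fin.snoc_last, Fin.val_castSucc, Fin.val_last]
  exact ⟨fun h => ⟨γ n, h, rfl⟩, fun ⟨_, h, _⟩ => h⟩

theorem pairwise_disjoint_cyl_snoc {α : Type} (n : ℕ) (c : Fin n → α) :
    Pairwise (Function.onFun Disjoint fun j => cyl (n + 1) (Fin.snoc c j)) := by
  intro j k hjk
  refine Set.disjoint_left.2 fun γ hj hk => hjk ?_
  simpa using (hj (Fin.last n)).symm.trans (hk (Fin.last n))

theorem toReal_measure_cyl_eq_sum (ν : @Measure (ℕ → ι) (treeMS ι)) [IsFiniteMeasure ν]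
    (n : ℕ) (c : Fin n → ι) :
    (ν (cyl n c)).toReal = ∑ j, (ν (cyl (n + 1) (Fin.snoc c j))).toReal := by
  let _ := treeMS ι
  rw [cyl_eq_iUnion_snoc, measure_iUnion (pairwise_disjoint_cyl_snoc n c)
    fun _ => measurableSet_cyl _ _, tsum_fintype, ENNReal.toReal_sum fun _ _ => measure_ne_top ν _]

theorem integral_comp_restrict_eq_sum (ν : @Measure (ℕ → ι) (treeMS ι)) [IsFiniteMeasure ν]
    (N : ℕ) (f : (Fin N → ι) → ℝ) :
    ∫ γ, f (fun i => γ i) ∂ν = ∑ c, (ν (cyl N c)).toReal * f c := by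
  let _ := treeMS ι
  have hsplit : ∀ γ : ℕ → ι,
      f (fun i => γ i) = ∑ c, (cyl N c).indicator (fun _ => f c) γ := by
    intro γ
    rw [Finset.sum_eq_single_of_mem (fun i : Fin N => γ i) (Finset.mem_univ _)]
    · rw [Set.indicator_of_mem (show γ ∈ cyl N fun i => γ i from fun _ => rfl)]
    · exact fun c _ hc => Set.indicator_of_notMem (fun h => hc (funext fun i => (h i).symm)) _
  simp_rw [hsplit]
  rw [integral_finsetSum _ fun c _ => (integrable_const _).indicator (measurableSet_cyl N c)]
  simp_rw [integral_indicator_const _ (measurableSet_cyl N _), smul_eq_mul, measureReal_def]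

theorem Mart.sum_val_succ [Nonempty ι] (F : Mart ι E) (n : ℕ) :
    ∑ d, F.val (n + 1) d = (Fintype.card ι : ℝ) • ∑ c, F.val n c := by
  rw [sum_fun_fin_succ, Finset.smul_sum]
  refine Finset.sum_congr rfl fun c _ => ?_
  rw [F.avg_eq n c, smul_inv_smul₀ (by positivity)]

theorem Mart.val_zero_eq_average [Nonempty ι] (F : Mart ι E) (c₀ : Fin 0 → ι) (n : ℕ) :
    F.val 0 c₀ = ((Fintype.card ι : ℝ) ^ n)⁻¹ • ∑ c, F.val n c := by
  induction n with
  | zero => simp [Subsingleton.elim c₀ default]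
  | succ n ih =>
    rw [ih, F.sum_val_succ, smul_smul, pow_succ, mul_inv, mul_assoc,
      inv_mul_cancel₀ (by positivity), mul_one]

theorem Mart.val_snoc_of_diff_eq_zero {F : Mart ι E} {n : ℕ} {c : Fin n → ι}
    (h : diff F n c = 0) (j : ι) : F.val (n + 1) (Fin.snoc c j) = F.val n c :=
  sub_eq_zero.1 (congrFun h j)

def FrostmanBound {m : ℕ} (ν : @Measure (ℕ → Fin m) (treeMS (Fin m))) (d A : ℝ) : Prop :=
  ∀ (n : ℕ) (c : Fin n → Fin m), (m : ℝ) ^ (d * n) * (ν (cyl n c)).toReal ≤ A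

section Bellman

variable {m : ℕ} {E' : Type} [NormedAddCommGroup E'] [NormedSpace ℝ E']

def zProc (F : Mart (Fin m) E') (N : ℕ) : (n : ℕ) → (Fin n → Fin m) → ℝ
  | n, c => if N ≤ n then ‖F.val n c‖ else (m : ℝ)⁻¹ * ∑ j, zProc F N (n + 1) (Fin.snoc c j)
  termination_by n _ => N - n

/- `s` is defined downwards from level `N` so that it satisfies the recursion
`s = max(t, m^d max_j s_j)` of the main inequality with equality, while staying below
`A m^{-dn}`. -/
def sProc (ν : @Measure (ℕ → Fin m) (treeMS (Fin m))) (d A : ℝ) (N : ℕ) :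
    (n : ℕ) → (Fin n → Fin m) → ℝ
  | n, c => if N ≤ n then A * (m : ℝ) ^ (-(d * n))
      else max (ν (cyl n c)).toReal ((m : ℝ) ^ d * ⨆ j, sProc ν d A N (n + 1) (Fin.snoc c j))
  termination_by n _ => N - n

def yProc (φ : (Fin m → E) → Fin m → ℝ) (α : ℝ) (F : Mart (Fin m) E) :
    (n : ℕ) → (Fin n → Fin m) → ℝ
  | 0, _ => 0
  | n + 1, c => (m : ℝ) ^ α * yProc φ α F n (Fin.init c)
      + φ (diff F n (Fin.init c)) (c (Fin.last n))

theorem zProc_of_le {F : Mart (Fin m) E'} {N n : ℕ} (h : N ≤ n) (c : Fin n → Fin m) :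
    zProc F N n c = ‖F.val n c‖ := by
  rw [zProc, if_pos h]

theorem zProc_eq_average [NeZero m] {F : Mart (Fin m) E'} {N : ℕ}
    (hN : ∀ n, N ≤ n → ∀ c : Fin n → Fin m, diff F n c = 0) (n : ℕ) (c : Fin n → Fin m) :
    zProc F N n c = (m : ℝ)⁻¹ * ∑ j, zProc F N (n + 1) (Fin.snoc c j) := by
  by_cases h : N ≤ n
  · simp only [zProc_of_le h, zProc_of_le (h.trans n.le_succ),
      Mart.val_snoc_of_diff_eq_zero (hN n h c), Finset.sum_const, Finset.card_univ,
      Fintype.card_fin, nsmul_eq_mul]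
    exact (inv_mul_cancel_left₀ (Nat.cast_ne_zero.2 (NeZero.ne m)) _).symm
  · rw [zProc, if_neg h]

theorem norm_le_zProc (F : Mart (Fin m) E') (N : ℕ) :
    ∀ (n : ℕ) (c : Fin n → Fin m), ‖F.val n c‖ ≤ zProc F N n c
  | n, c => by
    rw [zProc]
    split_ifs with h
    · exact le_rfl
    · calc ‖F.val n c‖ = (m : ℝ)⁻¹ * ‖∑ j, F.val (n + 1) (Fin.snoc c j)‖ := by
            rw [F.avg_eq n c, norm_smul, Fintype.card_fin, Real.norm_of_nonneg (by positivity)]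
        _ ≤ (m : ℝ)⁻¹ * ∑ j, zProc F N (n + 1) (Fin.snoc c j) := by
            gcongr
            exact (norm_sum_le _ _).trans
              (Finset.sum_le_sum fun j _ => norm_le_zProc F N (n + 1) (Fin.snoc c j))
  termination_by n _ => N - n

theorem zProc_nonneg (F : Mart (Fin m) E') (N n : ℕ) (c : Fin n → Fin m) :
    0 ≤ zProc F N n c :=
  (norm_nonneg _).trans (norm_le_zProc F N n c)

theorem zProc_zero_le_L1Norm [NeZero m] {F : Mart (Fin m) E'} {N : ℕ}
    (hN : ∀ n, N ≤ n → ∀ c : Fin n → Fin m, diff F n c = 0) (c₀ : Fin 0 → Fin m) :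
    zProc F N 0 c₀ ≤ L1Norm F := by
  let Z : Mart (Fin m) ℝ :=
    ⟨zProc F N, fun n c => by simpa using zProc_eq_average hN n c⟩
  have hZ : ∀ n, zProc F N 0 c₀ = ((m : ℝ) ^ n)⁻¹ * ∑ c, zProc F N n c := fun n => by
    simpa only [smul_eq_mul, Fintype.card_fin] using Z.val_zero_eq_average c₀ n
  have hbound : ∀ n, ((m : ℝ) ^ n)⁻¹ * ∑ c, ‖F.val n c‖ ≤ zProc F N 0 c₀ := fun n => by
    rw [hZ n]
    gcongr with c
    exact norm_le_zProc F N n c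
  rw [hZ N, Finset.sum_congr rfl fun c _ => zProc_of_le le_rfl c, L1Norm, Fintype.card_fin]
  exact le_ciSup ⟨_, Set.forall_mem_range.2 hbound⟩ N

theorem rpow_mul_mul_rpow_neg_succ {x : ℝ} (hx : 0 < x) (d A : ℝ) (n : ℕ) :
    x ^ d * (A * x ^ (-(d * ↑(n + 1)))) = A * x ^ (-(d * n)) := by
  rw [mul_left_comm, ← Real.rpow_add hx]
  push_cast
  ring_nf

variable {ν : @Measure (ℕ → Fin m) (treeMS (Fin m))} {d A : ℝ}

theorem toReal_measure_cyl_le [NeZero m] (hA : FrostmanBound ν d A) (n : ℕ)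
    (c : Fin n → Fin m) : (ν (cyl n c)).toReal ≤ A * (m : ℝ) ^ (-(d * n)) := by
  have hm : (0 : ℝ) < m := Nat.cast_pos.2 (NeZero.pos m)
  rw [Real.rpow_neg hm.le, ← div_eq_mul_inv, le_div_iff₀ (by positivity), mul_comm]
  exact hA n c

theorem sProc_le [NeZero m] (hA : FrostmanBound ν d A) (N : ℕ) :
    ∀ (n : ℕ) (c : Fin n → Fin m), sProc ν d A N n c ≤ A * (m : ℝ) ^ (-(d * n))
  | n, c => by
    rw [sProc]
    split_ifs
    · exact le_rfl
    · refine max_le (toReal_measure_cyl_le hA n c) ?_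
      calc (m : ℝ) ^ d * ⨆ j, sProc ν d A N (n + 1) (Fin.snoc c j)
          ≤ (m : ℝ) ^ d * (A * (m : ℝ) ^ (-(d * ↑(n + 1)))) := by
            gcongr
            exact ciSup_le fun j => sProc_le hA N (n + 1) (Fin.snoc c j)
        _ = A * (m : ℝ) ^ (-(d * n)) :=
            rpow_mul_mul_rpow_neg_succ (Nat.cast_pos.2 (NeZero.pos m)) d A n
  termination_by n _ => N - n

theorem toReal_measure_cyl_le_sProc [NeZero m] (hA : FrostmanBound ν d A) (N n : ℕ)
    (c : Fin n → Fin m) : (ν (cyl n c)).toReal ≤ sProc ν d A N n c := by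
  rw [sProc]
  split_ifs
  · exact toReal_measure_cyl_le hA n c
  · exact le_max_left _ _

theorem max_toReal_measure_cyl_iSup_sProc [NeZero m] (hA : FrostmanBound ν d A) (N n : ℕ)
    (c : Fin n → Fin m) :
    max (ν (cyl n c)).toReal ((m : ℝ) ^ d * ⨆ j, sProc ν d A N (n + 1) (Fin.snoc c j))
      = sProc ν d A N n c := by
  by_cases h : N ≤ n
  · have hkid : ∀ j, sProc ν d A N (n + 1) (Fin.snoc c j) = A * (m : ℝ) ^ (-(d * ↑(n + 1))) :=
      fun j => by rw [sProc, if_pos (h.trans n.le_succ)]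
    rw [sProc.eq_1 ν d A N n c, if_pos h]
    simp only [hkid, ciSup_const, rpow_mul_mul_rpow_neg_succ (Nat.cast_pos.2 (NeZero.pos m))]
    exact max_eq_right (toReal_measure_cyl_le hA n c)
  · rw [sProc.eq_1 ν d A N n c, if_neg h]

theorem yProc_snoc (φ : (Fin m → E) → Fin m → ℝ) (α : ℝ) (F : Mart (Fin m) E) (n : ℕ)
    (c : Fin n → Fin m) (j : Fin m) :
    yProc φ α F (n + 1) (Fin.snoc c j) = (m : ℝ) ^ α * yProc φ α F n c + φ (diff F n c) j := by
  rw [yProc, Fin.init_snoc, Fin.snoc_last]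

theorem rpow_mul_yProc_eq_sum [NeZero m] (φ : (Fin m → E) → Fin m → ℝ) (α : ℝ)
    (F : Mart (Fin m) E) (γ : ℕ → Fin m) (n : ℕ) :
    (m : ℝ) ^ (α * (1 - n)) * yProc φ α F n (fun i => γ i)
      = ∑ k ∈ Finset.range n, (m : ℝ) ^ (-(α * k)) * φ (diff F k fun i => γ i) (γ k) := by
  induction n with
  | zero => simp [yProc]
  | succ n ih =>
    have hinit : Fin.init (fun i : Fin (n + 1) => γ i) = fun i : Fin n => γ i := rfl
    rw [Finset.sum_range_succ, ← ih, yProc, hinit, Fin.val_last, mul_add, ← mul_assoc,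
      ← Real.rpow_add (Nat.cast_pos.2 (NeZero.pos m))]
    push_cast
    ring_nf

theorem Ialpha_eq_rpow_mul_yProc [NeZero m] {φ : (Fin m → E) → Fin m → ℝ} (hφ : φ 0 = 0)
    (α : ℝ) {F : Mart (Fin m) E} {N : ℕ}
    (hN : ∀ n, N ≤ n → ∀ c : Fin n → Fin m, diff F n c = 0) (γ : ℕ → Fin m) :
    Ialpha φ α F γ = (m : ℝ) ^ (α * (1 - N)) * yProc φ α F N (fun i => γ i) := by
  rw [Ialpha, tsum_eq_sum fun n hn => ?_, rpow_mul_yProc_eq_sum, Fintype.card_fin]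
  rw [hN n (by simpa using hn), hφ, Pi.zero_apply, mul_zero]

end Bellman

section Potential

variable {m : ℕ} {E' : Type} [NormedAddCommGroup E'] [NormedSpace ℝ E']
  (G : E' → ℝ → ℝ → ℝ → ℝ → ℝ) (φ : (Fin m → E') → Fin m → ℝ) (α : ℝ) (F : Mart (Fin m) E')
  (ν : @Measure (ℕ → Fin m) (treeMS (Fin m))) (A : ℝ) (N : ℕ)

def bellmanValue (n : ℕ) (c : Fin n → Fin m) : ℝ :=
  G (F.val n c) (yProc φ α F n c) (zProc F N n c) (ν (cyl n c)).toReal (sProc ν (1 - α) A N n c)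

def potential (n : ℕ) : ℝ :=
  (m : ℝ) ^ (-(α * n)) * ∑ c, bellmanValue G φ α F ν A N n c

variable {G φ α F ν A N} [NeZero m]

theorem bellmanValue_step [IsFiniteMeasure ν] {W : Set (Fin m → E')}
    (hG : MainInequality W φ α G) (hF : MemSpace W F)
    (hN : ∀ n, N ≤ n → ∀ c : Fin n → Fin m, diff F n c = 0) (hA : FrostmanBound ν (1 - α) A)
    (n : ℕ) (c : Fin n → Fin m) :
    (m : ℝ) ^ (-α) * ∑ j, bellmanValue G φ α F ν A N (n + 1) (Fin.snoc c j)
      ≤ bellmanValue G φ α F ν A N n c := by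
  have havg : avg (fun j => F.val (n + 1) (Fin.snoc c j)) = F.val n c := (F.avg_eq n c).symm
  have hdiff : (fun j => F.val (n + 1) (Fin.snoc c j) - avg fun j => F.val (n + 1) (Fin.snoc c j))
      = diff F n c := by
    rw [havg]; rfl
  have h := hG (fun j => F.val (n + 1) (Fin.snoc c j)) (yProc φ α F n c)
    (fun j => zProc F N (n + 1) (Fin.snoc c j))
    (fun j => (ν (cyl (n + 1) (Fin.snoc c j))).toReal)
    (fun j => sProc ν (1 - α) A N (n + 1) (Fin.snoc c j))
    (fun j => norm_le_zProc F N _ _) (fun _ => ENNReal.toReal_nonneg)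
    (fun j => toReal_measure_cyl_le_sProc hA N _ _) (hdiff ▸ hF n c)
  rw [hdiff, havg] at h
  simp only [Fintype.card_fin, ← yProc_snoc, ← zProc_eq_average hN,
    ← toReal_measure_cyl_eq_sum, max_toReal_measure_cyl_iSup_sProc hA] at h
  exact h

theorem potential_succ_le [IsFiniteMeasure ν] {W : Set (Fin m → E')}
    (hG : MainInequality W φ α G) (hF : MemSpace W F)
    (hN : ∀ n, N ≤ n → ∀ c : Fin n → Fin m, diff F n c = 0) (hA : FrostmanBound ν (1 - α) A)
    (n : ℕ) : potential G φ α F ν A N (n + 1) ≤ potential G φ α F ν A N n := by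
  have hsplit : (m : ℝ) ^ (-(α * ↑(n + 1))) = (m : ℝ) ^ (-(α * n)) * (m : ℝ) ^ (-α) := by
    rw [← Real.rpow_add (Nat.cast_pos.2 (NeZero.pos m))]
    push_cast
    ring_nf
  rw [potential, potential, sum_fun_fin_succ, hsplit, mul_assoc, Finset.mul_sum]
  gcongr with c
  exact bellmanValue_step hG hF hN hA n c

theorem integral_abs_Ialpha_le_potential [IsFiniteMeasure ν] (hφ : φ 0 = 0)
    (hB : BoundaryIneq G) (hN : ∀ n, N ≤ n → ∀ c : Fin n → Fin m, diff F n c = 0)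
    (hA : FrostmanBound ν (1 - α) A) :
    ∫ γ, |Ialpha φ α F γ| ∂ν ≤ (m : ℝ) ^ α * potential G φ α F ν A N N := by
  have hm : (0 : ℝ) < m := Nat.cast_pos.2 (NeZero.pos m)
  have hsplit : (m : ℝ) ^ (α * (1 - N)) = (m : ℝ) ^ α * (m : ℝ) ^ (-(α * N)) := by
    rw [← Real.rpow_add hm]
    ring_nf
  calc ∫ γ, |Ialpha φ α F γ| ∂ν
      = ∑ c, (ν (cyl N c)).toReal * |(m : ℝ) ^ (α * (1 - N)) * yProc φ α F N c| := by
        simp_rw [Ialpha_eq_rpow_mul_yProc hφ α hN]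
        exact integral_comp_restrict_eq_sum ν N fun c => |_ * yProc φ α F N c|
    _ = (m : ℝ) ^ α * ((m : ℝ) ^ (-(α * N)) *
          ∑ c, |yProc φ α F N c| * (ν (cyl N c)).toReal) := by
        rw [Finset.mul_sum, Finset.mul_sum]
        refine Finset.sum_congr rfl fun c _ => ?_
        rw [abs_mul, abs_of_nonneg (by positivity), hsplit]
        ring
    _ ≤ (m : ℝ) ^ α * potential G φ α F ν A N N := by
        unfold potential bellmanValue
        gcongr with c
        rw [zProc_of_le le_rfl]
        exact hB _ _ _ _ ENNReal.toReal_nonneg (toReal_measure_cyl_le_sProc hA N N c)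

theorem potential_zero_le {C₀ : ℝ}
    (hG : ∀ (x : E') (z t s : ℝ), ‖x‖ ≤ z → 0 ≤ t → t ≤ s → G x 0 z t s ≤ C₀ * (z * s))
    (hN : ∀ n, N ≤ n → ∀ c : Fin n → Fin m, diff F n c = 0) (hA : FrostmanBound ν (1 - α) A) :
    potential G φ α F ν A N 0 ≤ |C₀| * (L1Norm F * A) := by
  let c : Fin 0 → Fin m := Fin.elim0
  rw [potential, Nat.cast_zero, mul_zero, neg_zero, Real.rpow_zero, one_mul,
    Fintype.sum_subsingleton _ c]
  have hz := zProc_nonneg F N 0 c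
  have ht := toReal_measure_cyl_le_sProc hA N 0 c
  have hs : sProc ν (1 - α) A N 0 c ≤ A := by simpa using sProc_le hA N 0 c
  calc bellmanValue G φ α F ν A N 0 c
      ≤ C₀ * (zProc F N 0 c * sProc ν (1 - α) A N 0 c) :=
        hG _ _ _ _ (norm_le_zProc F N 0 c) ENNReal.toReal_nonneg ht
    _ ≤ |C₀| * (zProc F N 0 c * sProc ν (1 - α) A N 0 c) :=
        mul_le_mul_of_nonneg_right (le_abs_self C₀)
          (mul_nonneg hz (ENNReal.toReal_nonneg.trans ht))
    _ ≤ |C₀| * (L1Norm F * A) :=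
        mul_le_mul_of_nonneg_left (mul_le_mul (zProc_zero_le_L1Norm hN c) hs
          (ENNReal.toReal_nonneg.trans ht) (hz.trans (zProc_zero_le_L1Norm hN c))) (abs_nonneg C₀)

end Potential

theorem statement9_general (m ℓ : ℕ) (hm : 2 ≤ m)
    (α : ℝ) (C₀ : ℝ) :
    ∃ C : ℝ,
      ∀ W : Submodule ℝ (Fin m → EuclideanSpace ℝ (Fin ℓ)), (∀ w ∈ W, ∑ j, w j = 0) →
      ∀ φ : (Fin m → EuclideanSpace ℝ (Fin ℓ)) →ₗ[ℝ] (Fin m → ℝ), (∀ w ∈ W, ∑ j, φ w j = 0) →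
      ∀ G : EuclideanSpace ℝ (Fin ℓ) → ℝ → ℝ → ℝ → ℝ → ℝ,
        MainInequality (W : Set (Fin m → EuclideanSpace ℝ (Fin ℓ))) (fun w => φ w) α G →
        BoundaryIneq G →
        (∀ (x : EuclideanSpace ℝ (Fin ℓ)) (z t s : ℝ),
          ‖x‖ ≤ z → 0 ≤ t → t ≤ s → G x 0 z t s ≤ C₀ * (z * s)) →
        ∀ ν : @Measure (ℕ → Fin m) (treeMS (Fin m)), IsFiniteMeasure ν →
        ∀ F : Mart (Fin m) (EuclideanSpace ℝ (Fin ℓ)),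
          MemSpace (W : Set (Fin m → EuclideanSpace ℝ (Fin ℓ))) F → Simple F →
          ∀ A : ℝ,
            (∀ (n : ℕ) (c : Fin n → Fin m),
              (m : ℝ) ^ (((1 : ℝ) - α) * n) * (ν (cyl n c)).toReal ≤ A) →
            ∫ γ, |Ialpha (fun w => φ w) α F γ| ∂ν ≤ C * A * L1Norm F := by
  refine ⟨(m : ℝ) ^ α * |C₀|, fun W _ φ _ G hMain hB hG0 ν _ F hF ⟨N, hN⟩ A hA => ?_⟩
  have : NeZero m := ⟨by omega⟩
  calc ∫ γ, |Ialpha (fun w => φ w) α F γ| ∂ν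
      ≤ (m : ℝ) ^ α * potential G (fun w => φ w) α F ν A N N :=
        integral_abs_Ialpha_le_potential (map_zero φ) hB hN hA
    _ ≤ (m : ℝ) ^ α * potential G (fun w => φ w) α F ν A N 0 := by
        gcongr
        exact antitone_nat_of_succ_le (potential_succ_le hMain hF hN hA) N.zero_le
    _ ≤ (m : ℝ) ^ α * (|C₀| * (L1Norm F * A)) := by
        gcongr
        exact potential_zero_le hG0 hN hA
    _ = (m : ℝ) ^ α * |C₀| * A * L1Norm F := by ring

/-- Corollary `SuperSolutionCor`: if there is a function `G` on the Bellman
domain satisfying the main inequality, the boundary inequality, and `G(x,0,z,t,s) ≤ C₀ z s`,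
then the bilinear trace inequality holds, with a constant depending only on `C₀`. -/
theorem statement9 (m ℓ : ℕ) (hm : 2 ≤ m) (hℓ : 1 ≤ ℓ)
    (α : ℝ) (hα : α ∈ Set.Ioo (0 : ℝ) 1) (C₀ : ℝ) :
    ∃ C : ℝ,
      ∀ W : Submodule ℝ (Fin m → EuclideanSpace ℝ (Fin ℓ)), (∀ w ∈ W, ∑ j, w j = 0) →
      ∀ φ : (Fin m → EuclideanSpace ℝ (Fin ℓ)) →ₗ[ℝ] (Fin m → ℝ), (∀ w ∈ W, ∑ j, φ w j = 0) →
      ∀ G : EuclideanSpace ℝ (Fin ℓ) → ℝ → ℝ → ℝ → ℝ → ℝ,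
        MainInequality (W : Set (Fin m → EuclideanSpace ℝ (Fin ℓ))) (fun w => φ w) α G →
        BoundaryIneq G →
        (∀ (x : EuclideanSpace ℝ (Fin ℓ)) (z t s : ℝ),
          ‖x‖ ≤ z → 0 ≤ t → t ≤ s → G x 0 z t s ≤ C₀ * (z * s)) →
        ∀ ν : @Measure (ℕ → Fin m) (treeMS (Fin m)), IsFiniteMeasure ν →
        ∀ F : Mart (Fin m) (EuclideanSpace ℝ (Fin ℓ)),
          MemSpace (W : Set (Fin m → EuclideanSpace ℝ (Fin ℓ))) F → Simple F →
          ∀ A : ℝ,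
            (∀ (n : ℕ) (c : Fin n → Fin m),
              (m : ℝ) ^ (((1 : ℝ) - α) * n) * (ν (cyl n c)).toReal ≤ A) →
            ∫ γ, |Ialpha (fun w => φ w) α F γ| ∂ν ≤ C * A * L1Norm F :=
  statement9_general m ℓ hm α C₀

end TracePaper
end
end

section
/- For every μ ≥ 2 and d ≥ 1, the space W_∇ is a geometric space of order 1/d; that is, its function κ satisfies κ(θ) = (1/d)·(log m)·(1−θ) = (log μ)·(1−θ) for all θ ∈ [0,1]. -/
/-!
If `v ⊗ a = ∇f` with `a j ≠ 0`, then `a j • v = f (· + e_j) - f` telescopes along every line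
`x + ℤ e_j`, so `v` sums to zero on each of these `μ`-point lines; since `1 + v ≥ 0`, this forces
`1 + v ≤ μ`. On `[0, μ]` we have `t ^ p ≤ μ ^ (p - 1) t`, and `1 + v` has mean `1`, which gives
`κ_v(θ) ≤ (1 - θ) log μ`. Equality is attained by `v = μ • 1{x_j = -1} - 1`, the `j`-th partial
difference of `x ↦ -(x j).val`: `1 + v` takes only the values `0` and `μ`.
-/

open MeasureTheory Finset

noncomputable section

namespace TracePaper

variable {ι : Type} [Fintype ι]
variable {E : Type} [AddCommGroup E] [Module ℝ E]

section GroupSetting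

/-- The group `G = (ℤ/μ)^d`, identified with the branching index set `{1, …, m}`, `m = μ^d`. -/
abbrev Gp (μ d : ℕ) : Type := Fin d → ZMod μ

/-- The character value `e^{2πi z/μ}` for `z ∈ ℤ/μ`. -/
def ch (μ : ℕ) (z : ZMod μ) : ℂ :=
  Complex.exp (2 * Real.pi * Complex.I * (z.val : ℂ) / (μ : ℂ))

/-- The standard generators `e_j` of `(ℤ/μ)^d`. -/
def egen (μ d : ℕ) (j : Fin d) : Gp μ d := Pi.single j 1

variable (μ d : ℕ) [NeZero μ]

/-- The martingale analogue `W_∇` of the space `BV(ℝ^d)`: discrete gradients of real-valued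
functions on `G`. -/
def Wgrad : Set (Gp μ d → EuclideanSpace ℂ (Fin d)) :=
  {g | (∑ x, g x = 0) ∧
    ∃ f : Gp μ d → ℝ, ∀ (x : Gp μ d) (j : Fin d),
      g x j = (f (x + egen μ d j) : ℂ) - (f x : ℂ)}

/-- The martingale analogue `W_div` of the space of divergence-free measures. -/
def Wdiv : Set (Gp μ d → EuclideanSpace ℂ (Fin d)) :=
  {g | (∑ x, g x = 0) ∧
    ∀ x : Gp μ d, ∑ j, (g (x + egen μ d j) j - g x j) = 0}

/-- The Hermitian inner product `⟨u, v⟩ = ∑_j conj(u_j) v_j` on `ℂ^d`. -/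
def hermC (u v : EuclideanSpace ℂ (Fin d)) : ℂ :=
  ∑ j, (starRingEnd ℂ) (u j) * v j

/-- The translation invariant (convolution) operator `φ[f](x) = ∑_y ⟨K(x-y), f(y)⟩`. -/
def convOp (K : Gp μ d → EuclideanSpace ℂ (Fin d))
    (f : Gp μ d → EuclideanSpace ℂ (Fin d)) (x : Gp μ d) : ℂ :=
  ∑ y, hermC d (K (x - y)) (f y)

end GroupSetting

section Kappa

variable {ι : Type} [Fintype ι]

lemma log_le_log_of_nonneg_of_one_le {x y : ℝ} (hx : 0 ≤ x) (hxy : x ≤ y) (hy : 1 ≤ y) :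
    Real.log x ≤ Real.log y := by
  rcases hx.eq_or_lt with rfl | hx
  · simpa using Real.log_nonneg hy
  · exact Real.log_le_log hx hxy

lemma kappaV_le {v : ι → ℝ} {M θ : ℝ} (hM : 1 ≤ M) (hsum : ∑ x, v x = 0)
    (hlo : ∀ x, 0 ≤ 1 + v x) (hhi : ∀ x, 1 + v x ≤ M) (hθ : θ ∈ Set.Icc (0 : ℝ) 1) :
    kappaV ι v θ ≤ Real.log M * (1 - θ) := by
  obtain ⟨hθ0, hθ1⟩ := hθ
  rcases hθ0.eq_or_lt with rfl | hθpos
  · rw [kappaV, if_pos rfl, sub_zero, mul_one]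
    refine log_le_log_of_nonneg_of_one_le (Real.iSup_nonneg fun _ => abs_nonneg _)
      (Real.iSup_le (fun x => ?_) (by linarith)) hM
    rw [abs_of_nonneg (hlo x)]
    exact hhi x
  rw [kappaV, if_neg hθpos.ne']
  set p := 1 / θ
  have hp : 0 ≤ p - 1 := by rw [sub_nonneg, le_div_iff₀ hθpos]; linarith
  have hpow : ∀ x, |1 + v x| ^ p ≤ M ^ (p - 1) * (1 + v x) := fun x => by
    rw [abs_of_nonneg (hlo x)]
    rcases (hlo x).eq_or_lt with h | h
    · rw [← h, Real.zero_rpow (by positivity), mul_zero]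
    · calc (1 + v x) ^ p = (1 + v x) ^ (p - 1) * (1 + v x) := by
            rw [← Real.rpow_add_one h.ne', sub_add_cancel]
        _ ≤ M ^ (p - 1) * (1 + v x) := by gcongr; exact hhi x
  have havg : (Fintype.card ι : ℝ)⁻¹ * ∑ x, |1 + v x| ^ p ≤ M ^ (p - 1) := by
    rcases isEmpty_or_nonempty ι with hι | hι
    · simpa using Real.rpow_nonneg (by linarith) _
    calc (Fintype.card ι : ℝ)⁻¹ * ∑ x, |1 + v x| ^ p
        ≤ (Fintype.card ι : ℝ)⁻¹ * ∑ x, M ^ (p - 1) * (1 + v x) := by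
          gcongr with x; exact hpow x
      _ = M ^ (p - 1) := by
          rw [← Finset.mul_sum, Finset.sum_add_distrib, hsum]
          field_simp
          simp
  calc θ * Real.log ((Fintype.card ι : ℝ)⁻¹ * ∑ x, |1 + v x| ^ p)
      ≤ θ * Real.log (M ^ (p - 1)) := mul_le_mul_of_nonneg_left
        (log_le_log_of_nonneg_of_one_le (by positivity) havg (Real.one_le_rpow hM hp)) hθ0
    _ = Real.log M * (1 - θ) := by
        rw [Real.log_rpow (by linarith)]
        simp only [p]
        field_simp

lemma kappaV_eq_of_one_add_eq_ite [DecidableEq ι] {v : ι → ℝ} {M θ : ℝ} (S : Finset ι)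
    (hS : S.Nonempty) (hM : 0 < M) (hv : ∀ x, 1 + v x = if x ∈ S then M else 0)
    (hsum : ∑ x, v x = 0) (hθ : θ ∈ Set.Icc (0 : ℝ) 1) :
    kappaV ι v θ = Real.log M * (1 - θ) := by
  rcases hθ.1.eq_or_lt with rfl | hθpos
  · obtain ⟨x₀, hx₀⟩ := hS
    have hsup : ⨆ x, |1 + v x| = M := by
      refine le_antisymm (Real.iSup_le (fun x => ?_) hM.le) ?_
      · rw [hv]; split_ifs <;> simp [abs_of_pos hM, hM.le]
      · refine le_trans ?_ (le_ciSup (Set.finite_range _).bddAbove x₀)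
        rw [hv, if_pos hx₀, abs_of_pos hM]
    rw [kappaV, if_pos rfl, hsup, sub_zero, mul_one]
  rw [kappaV, if_neg hθpos.ne']
  have hcard : (Fintype.card ι : ℝ) = M * S.card := by
    have := Finset.sum_congr rfl fun x (_ : x ∈ Finset.univ) => hv x
    rw [Finset.sum_add_distrib, hsum, Finset.sum_ite_mem, Finset.univ_inter] at this
    simpa [mul_comm] using this
  have hpow : ∀ x, |1 + v x| ^ (1 / θ) = if x ∈ S then M ^ (1 / θ) else 0 := fun x => by
    rw [hv]
    split_ifs
    · rw [abs_of_pos hM]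
    · rw [abs_zero, Real.zero_rpow (by positivity)]
  have havg : (M * S.card)⁻¹ * (S.card * M ^ (1 / θ)) = M ^ (1 / θ - 1) := by
    rw [Real.rpow_sub hM, Real.rpow_one]
    field_simp
  rw [Finset.sum_congr rfl fun x _ => hpow x, Finset.sum_ite_mem, Finset.univ_inter,
    Finset.sum_const, nsmul_eq_mul, hcard, havg, Real.log_rpow hM]
  field_simp

end Kappa

lemma ZMod.val_add_one_add_ite {μ : ℕ} [NeZero μ] (z : ZMod μ) :
    ((z + 1).val : ℝ) + (if z = -1 then (μ : ℝ) else 0) = z.val + 1 := by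
  have hcast : z + 1 = ((z.val + 1 : ℕ) : ZMod μ) := by push_cast [ZMod.natCast_zmod_val]; rfl
  rcases (show z.val + 1 ≤ μ from z.val_lt).lt_or_eq with hlt | heq
  · have hval : (z + 1).val = z.val + 1 := by rw [hcast, ZMod.val_natCast_of_lt hlt]
    have hne : z ≠ -1 := fun h => by
      rw [eq_neg_iff_add_eq_zero, ← ZMod.val_eq_zero, hval] at h
      omega
    rw [if_neg hne, hval]
    push_cast
    ring
  · have hz : z = -1 := by
      rw [eq_neg_iff_add_eq_zero, hcast, heq, ZMod.natCast_self]
    rw [if_pos hz, hz, neg_add_cancel, ZMod.val_zero, ← hz, ← Nat.cast_add_one, heq]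
    simp

section Gradient

variable {μ d : ℕ} [NeZero μ]

lemma sum_apply_add_single_eq_zero_of_mem_Wgrad {g : Gp μ d → EuclideanSpace ℂ (Fin d)}
    (hg : g ∈ Wgrad μ d) (j : Fin d) (x : Gp μ d) :
    ∑ k : ZMod μ, g (x + Pi.single j k) j = 0 := by
  obtain ⟨-, f, hf⟩ := hg
  have hstep : ∀ k : ZMod μ, x + Pi.single j k + egen μ d j = x + Pi.single j (k + 1) :=
    fun k => by rw [egen, add_assoc, ← Pi.single_add]
  simp only [hf, hstep]
  rw [Finset.sum_sub_distrib, sub_eq_zero]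
  exact Fintype.sum_equiv (Equiv.addRight 1) _ _ fun _ => rfl

lemma one_add_le_of_mem_MW_Wgrad {v : Gp μ d → ℝ} (hv : v ∈ MW (Wgrad μ d)) (x : Gp μ d) :
    1 + v x ≤ μ := by
  obtain ⟨-, hlo, a, ha, hW⟩ := hv
  obtain ⟨j, hj⟩ : ∃ j, a j ≠ 0 := by
    by_contra! h
    exact ha (by ext j; exact h j)
  have hline : ∑ k : ZMod μ, v (x + Pi.single j k) = 0 := by
    have := sum_apply_add_single_eq_zero_of_mem_Wgrad hW j x
    simp only [PiLp.smul_apply, Complex.real_smul, ← Finset.sum_mul] at this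
    exact_mod_cast (mul_eq_zero.mp this).resolve_right hj
  calc 1 + v x = 1 + v (x + Pi.single j 0) := by simp
    _ ≤ ∑ k, (1 + v (x + Pi.single j k)) :=
        Finset.single_le_sum (f := fun k => 1 + v (x + Pi.single j k))
          (fun k _ => by linarith [hlo (x + Pi.single j k)]) (Finset.mem_univ 0)
    _ = μ := by simp [Finset.sum_add_distrib, hline, ZMod.card]

def extremalVec (μ d : ℕ) (j : Fin d) : Gp μ d → ℝ :=
  fun x => if x j = -1 then (μ : ℝ) - 1 else -1

lemma one_add_extremalVec (j : Fin d) (x : Gp μ d) :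
    1 + extremalVec μ d j x = if x ∈ ({x | x j = -1} : Finset (Gp μ d)) then (μ : ℝ) else 0 := by
  simp only [extremalVec, Finset.mem_filter, Finset.mem_univ, true_and]
  split_ifs <;> ring

lemma sum_extremalVec (j : Fin d) : ∑ x, extremalVec μ d j x = 0 := by
  have hcard : ({x | x j = -1} : Finset (Gp μ d)).card = μ ^ (d - 1) := by
    simpa [Fintype.piFinset_univ, ZMod.card] using
      Fintype.card_filter_piFinset_const_eq_of_mem (Finset.univ : Finset (ZMod μ)) j
        (Finset.mem_univ (-1))
  have hsum : ∑ x, (1 + extremalVec μ d j x) = (μ : ℝ) ^ d := by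
    rw [Finset.sum_congr rfl fun x _ => one_add_extremalVec j x, Finset.sum_ite_mem,
      Finset.univ_inter, Finset.sum_const, hcard, nsmul_eq_mul, Nat.cast_pow, ← pow_succ,
      Nat.sub_add_cancel j.pos]
  rw [Finset.sum_add_distrib] at hsum
  simpa [ZMod.card] using hsum

lemma extremalVec_eq_val_sub_val (j : Fin d) (x : Gp μ d) :
    extremalVec μ d j x = (x j).val - (x j + 1).val := by
  have h := ZMod.val_add_one_add_ite (x j)
  rw [extremalVec]
  split_ifs at h ⊢ <;> linarith

lemma extremalVec_mem_MW (j : Fin d) : extremalVec μ d j ∈ MW (Wgrad μ d) := by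
  have hμ : (1 : ℝ) ≤ μ := Nat.one_le_cast.mpr NeZero.one_le
  refine ⟨sum_extremalVec j, fun x => ?_, EuclideanSpace.single j 1, by simp, ?_,
    fun x => -((x j).val : ℝ), fun x i => ?_⟩
  · unfold extremalVec
    split_ifs <;> linarith
  · rw [← Finset.sum_smul, sum_extremalVec, zero_smul]
  · rw [PiLp.smul_apply, PiLp.single_apply]
    split_ifs with hij
    · subst hij
      simp only [egen, Pi.add_apply, Pi.single_eq_same, extremalVec_eq_val_sub_val,
        Complex.real_smul, mul_one]
      push_cast
      ring
    · simp [egen, Ne.symm hij]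

lemma kappaV_extremalVec (j : Fin d) {θ : ℝ} (hθ : θ ∈ Set.Icc (0 : ℝ) 1) :
    kappaV (Gp μ d) (extremalVec μ d j) θ = Real.log μ * (1 - θ) :=
  kappaV_eq_of_one_add_eq_ite {x | x j = -1} ⟨fun _ => -1, by simp⟩
    (Nat.cast_pos.mpr (NeZero.pos μ)) (one_add_extremalVec j) (sum_extremalVec j) hθ

end Gradient

theorem statement10_general (μ d : ℕ) [NeZero μ] (hd : 1 ≤ d) :
    ∀ θ ∈ Set.Icc (0 : ℝ) 1,
      kappa (Wgrad μ d) θ = (d : ℝ)⁻¹ * Real.log ((μ : ℝ) ^ d) * (1 - θ) := by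
  intro θ hθ
  rw [Real.log_pow, inv_mul_cancel_left₀ (by positivity)]
  refine IsGreatest.csSup_eq ⟨⟨extremalVec μ d ⟨0, hd⟩, extremalVec_mem_MW _,
    (kappaV_extremalVec _ hθ).symm⟩, ?_⟩
  rintro _ ⟨v, hv, rfl⟩
  exact kappaV_le (Nat.one_le_cast.mpr NeZero.one_le) hv.1 (fun x => by linarith [hv.2.1 x])
    (one_add_le_of_mem_MW_Wgrad hv) hθ

/-- the space `W_∇` is a geometric space of order `1/d`:
`κ(θ) = (1/d)(log m)(1-θ) = (log μ)(1-θ)` on `[0,1]`. -/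
theorem statement10 (μ d : ℕ) [NeZero μ] (hμ : 2 ≤ μ) (hd : 1 ≤ d) :
    ∀ θ ∈ Set.Icc (0 : ℝ) 1,
      kappa (Wgrad μ d) θ = (d : ℝ)⁻¹ * Real.log ((μ : ℝ) ^ d) * (1 - θ) :=
  statement10_general μ d hd

end TracePaper
end
end

section
/- For every μ ≥ 4 and d ≥ 2, the space W_div is a geometric space of order (d−1)/d; that is, its function κ satisfies κ(θ) = ((d−1)/d)·(log m)·(1−θ) = (d−1)·(log μ)·(1−θ) for all θ ∈ [0,1]. -/
open MeasureTheory Finset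

noncomputable section

namespace TracePaper

variable {ι : Type} [Fintype ι]
variable {E : Type} [AddCommGroup E] [Module ℝ E]

/-!
If `v ⊗ a` is divergence free and `a i ≠ 0`, summing the divergence over the hyperplane
`{x i = k}` leaves `a i` times the difference of the sums of `v` over `{x i = k + 1}` and
`{x i = k}`. So all hyperplane sums of `1 + v ≥ 0` are equal, hence equal to `μ ^ (d - 1)`,
and `1 + v ≤ μ ^ (d - 1)` pointwise. For nonnegative weights of mean one bounded by `B`,
`κ_v(θ) ≤ (1 - θ) log B`, with equality when the weights take only the values `B` and `0`.
Such a `v` is obtained from the indicator of the subgroup generated by `e i`: it is invariant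
under translation by `e i`, so `v ⊗ e i` is divergence free.
-/

section KappaV

variable {ι : Type} [Fintype ι]

lemma rpow_le_mul_rpow_sub_one {t B p : ℝ} (ht : 0 ≤ t) (htB : t ≤ B) (hp : 1 ≤ p) :
    t ^ p ≤ t * B ^ (p - 1) :=
  calc t ^ p = t ^ (1 + (p - 1)) := by ring_nf
    _ = t * t ^ (p - 1) := by rw [Real.rpow_add' ht (by linarith), Real.rpow_one]
    _ ≤ t * B ^ (p - 1) := by gcongr

lemma kappaV_le_mul_log [Nonempty ι] {v : ι → ℝ} (hsum : ∑ j, v j = 0) (hv : ∀ j, -1 ≤ v j)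
    {B : ℝ} (hB : ∀ j, 1 + v j ≤ B) {θ : ℝ} (hθ : θ ∈ Set.Icc (0 : ℝ) 1) :
    kappaV ι v θ ≤ (1 - θ) * Real.log B := by
  obtain ⟨j₀, -, hj₀⟩ : ∃ j ∈ univ, (0 : ℝ) ≤ v j :=
    Finset.exists_le_of_sum_le univ_nonempty (by simp [hsum])
  have habs : ∀ j, |1 + v j| = 1 + v j := fun j => abs_of_nonneg (by linarith [hv j])
  rcases hθ.1.eq_or_lt with rfl | hθpos
  · simp only [kappaV, if_pos, habs, sub_zero, one_mul]
    refine Real.log_le_log ?_ (ciSup_le hB)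
    linarith [le_ciSup (Set.finite_range (fun j => 1 + v j)).bddAbove j₀]
  · have hp : 1 ≤ 1 / θ := by rw [le_div_iff₀ hθpos]; linarith [hθ.2]
    have hBpos : 0 < B := by linarith [hB j₀]
    have hmean : (Fintype.card ι : ℝ)⁻¹ * ∑ j, |1 + v j| ^ (1 / θ) ≤ B ^ (1 / θ - 1) := by
      rw [inv_mul_le_iff₀ (by positivity)]
      calc ∑ j, |1 + v j| ^ (1 / θ) ≤ ∑ j, (1 + v j) * B ^ (1 / θ - 1) := by
            gcongr with j
            rw [habs]
            exact rpow_le_mul_rpow_sub_one (by linarith [hv j]) (hB j) hp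
        _ = Fintype.card ι * B ^ (1 / θ - 1) := by
            rw [← sum_mul, sum_add_distrib, hsum]; simp
    have hmean_pos : 0 < (Fintype.card ι : ℝ)⁻¹ * ∑ j, |1 + v j| ^ (1 / θ) := by
      have h1 : 1 ≤ |1 + v j₀| ^ (1 / θ) :=
        Real.one_le_rpow (by rw [habs]; linarith) (by positivity)
      have h2 := Finset.single_le_sum (f := fun j => |1 + v j| ^ (1 / θ))
        (fun j _ => by positivity) (mem_univ j₀)
      exact mul_pos (by simp [Fintype.card_pos]) (by linarith)
    rw [kappaV, if_neg hθpos.ne']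
    calc θ * Real.log ((Fintype.card ι : ℝ)⁻¹ * ∑ j, |1 + v j| ^ (1 / θ))
        ≤ θ * Real.log (B ^ (1 / θ - 1)) := by gcongr
      _ = (1 - θ) * Real.log B := by rw [Real.log_rpow hBpos]; field_simp

lemma kappaV_ite_mem_sub_one [DecidableEq ι] {H : Finset ι} (hH : H.Nonempty) {B : ℝ}
    (hB : 0 < B) (hcard : (H.card : ℝ) * B = Fintype.card ι) {θ : ℝ} (hθ : 0 ≤ θ) :
    kappaV ι (fun j => (if j ∈ H then B else 0) - 1) θ = (1 - θ) * Real.log B := by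
  have habs : ∀ j, |1 + ((if j ∈ H then B else 0) - 1)| = if j ∈ H then B else 0 := fun j => by
    rw [add_sub_cancel, abs_of_nonneg (by split_ifs <;> positivity)]
  obtain ⟨j₀, hj₀⟩ := hH
  have : Nonempty ι := ⟨j₀⟩
  simp only [kappaV, habs]
  rcases hθ.eq_or_lt with rfl | hθpos
  · have hsup : (⨆ j, if j ∈ H then B else 0) = B :=
      le_antisymm (ciSup_le fun j => by split_ifs <;> linarith)
        (by simpa [hj₀] using
          le_ciSup (Set.finite_range fun j => if j ∈ H then B else 0).bddAbove j₀)
    simp [hsup]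
  · have hsum : ∑ j, (if j ∈ H then B else 0) ^ (1 / θ) = H.card * B ^ (1 / θ) := by
      simp [Real.zero_rpow (inv_ne_zero hθpos.ne'), sum_ite_mem]
    have hmean : (Fintype.card ι : ℝ)⁻¹ * (H.card * B ^ (1 / θ)) = B ^ (1 / θ - 1) := by
      have : (H.card : ℝ) ≠ 0 := Nat.cast_ne_zero.2 (card_ne_zero_of_mem hj₀)
      rw [← hcard, Real.rpow_sub_one hB.ne']
      field_simp
    rw [if_neg hθpos.ne', hsum, hmean, Real.log_rpow hB]
    field_simp

end KappaV

section DivergenceFree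

variable {μ d : ℕ}

lemma ZMod.apply_eq_apply_zero_of_add_one [NeZero μ] {α : Type*} {f : ZMod μ → α}
    (h : ∀ k, f (k + 1) = f k) (k : ZMod μ) : f k = f 0 := by
  obtain ⟨n, rfl⟩ := ZMod.natCast_zmod_surjective k
  induction n with
  | zero => simp
  | succ n ih => rw [Nat.cast_succ, h, ih]

lemma sum_egen_sub_smul_apply (v : Gp μ d → ℝ) (a : EuclideanSpace ℂ (Fin d)) (x : Gp μ d) :
    ∑ j, ((v (x + egen μ d j) • a) j - (v x • a) j)
      = ∑ j, ((v (x + egen μ d j) - v x : ℝ) : ℂ) * a j := by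
  simp [sub_mul]

variable [NeZero μ]

def hyperplaneSum (w : Gp μ d → ℝ) (i : Fin d) (k : ZMod μ) : ℝ :=
  ∑ x with x i = k, w x

lemma sum_filter_apply_eq_add (w : Gp μ d → ℝ) (i : Fin d) (c : Gp μ d) (k : ZMod μ) :
    ∑ x with x i = k, w (x + c) = hyperplaneSum w i (k + c i) :=
  Finset.sum_equiv (Equiv.addRight c) (by simp) (by simp)

lemma hyperplaneSum_add_one {w : Gp μ d → ℝ} {a : EuclideanSpace ℂ (Fin d)} {i : Fin d}
    (hw : ∀ x, ∑ j, ((w (x + egen μ d j) - w x : ℝ) : ℂ) * a j = 0) (ha : a i ≠ 0)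
    (k : ZMod μ) : hyperplaneSum w i (k + 1) = hyperplaneSum w i k := by
  have hflux : ∑ j, ((hyperplaneSum w i (k + egen μ d j i) - hyperplaneSum w i k : ℝ) : ℂ)
      * a j = 0 :=
    calc _ = ∑ x with x i = k, ∑ j, ((w (x + egen μ d j) - w x : ℝ) : ℂ) * a j := by
          rw [sum_comm]
          refine sum_congr rfl fun j _ => ?_
          rw [← sum_filter_apply_eq_add, hyperplaneSum, ← sum_sub_distrib, Complex.ofReal_sum,
            sum_mul]
      _ = 0 := sum_eq_zero fun x _ => hw x
  -- translation by `e_j` with `j ≠ i` maps each hyperplane `{x i = k}` to itself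
  rw [Fintype.sum_eq_single i fun j hj => by simp [egen, Pi.single_eq_of_ne' hj]] at hflux
  simpa [egen, ha, sub_eq_zero] using hflux

lemma hyperplaneSum_eq_mean {w : Gp μ d → ℝ} {a : EuclideanSpace ℂ (Fin d)} {i : Fin d}
    (hw : ∀ x, ∑ j, ((w (x + egen μ d j) - w x : ℝ) : ℂ) * a j = 0) (ha : a i ≠ 0)
    (k : ZMod μ) : hyperplaneSum w i k = (μ : ℝ)⁻¹ * ∑ x, w x := by
  have hconst := ZMod.apply_eq_apply_zero_of_add_one (hyperplaneSum_add_one hw ha)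
  have htotal : ∑ k : ZMod μ, hyperplaneSum w i k = ∑ x, w x := by
    unfold hyperplaneSum
    rw [sum_fiberwise]
  rw [sum_congr rfl fun k _ => hconst k, sum_const, card_univ, ZMod.card, nsmul_eq_mul] at htotal
  rw [hconst k, ← htotal, inv_mul_cancel_left₀ (Nat.cast_ne_zero.2 (NeZero.ne μ))]

lemma one_add_le_of_mem_MW {v : Gp μ d → ℝ} (hv : v ∈ MW (Wdiv μ d)) (x : Gp μ d) :
    1 + v x ≤ (μ : ℝ) ^ (d - 1) := by
  obtain ⟨hsum, hge, a, ha, -, hdiv⟩ := hv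
  obtain ⟨i, hi⟩ : ∃ i, a i ≠ 0 := by
    by_contra! h
    exact ha (by ext i; simpa using h i)
  have hw : ∀ y, ∑ j, (((1 + v (y + egen μ d j)) - (1 + v y) : ℝ) : ℂ) * a j = 0 := fun y => by
    simpa [sub_mul] using hdiv y
  obtain ⟨n, rfl⟩ := Nat.exists_eq_add_one_of_ne_zero i.pos.ne'
  calc 1 + v x ≤ hyperplaneSum (fun y => 1 + v y) i (x i) :=
        single_le_sum (f := fun y => 1 + v y) (fun y _ => by linarith [hge y]) (by simp)
    _ = (μ : ℝ) ^ (n + 1 - 1) := by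
        rw [hyperplaneSum_eq_mean hw hi, sum_add_distrib, hsum]
        simp [pow_succ', NeZero.ne μ]

open Classical in
def axis (μ d : ℕ) [NeZero μ] (i : Fin d) : Finset (Gp μ d) :=
  {x | x ∈ AddSubgroup.zmultiples (egen μ d i)}

lemma card_axis (i : Fin d) : (axis μ d i).card = μ := by
  rw [axis, ← Fintype.card_subtype, Fintype.card_eq_nat_card, Nat.card_zmultiples, egen,
    ← AddMonoidHom.single_apply,
    addOrderOf_injective _ (Pi.single_injective (M := fun _ => ZMod μ) i), ZMod.addOrderOf_one]

lemma mem_axis_add_egen {i : Fin d} {x : Gp μ d} :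
    x + egen μ d i ∈ axis μ d i ↔ x ∈ axis μ d i := by
  simpa [axis] using
    AddSubgroup.add_mem_cancel_right _ (AddSubgroup.mem_zmultiples (egen μ d i))

lemma mem_MW_Wdiv_axis (i : Fin d) :
    (fun x => (if x ∈ axis μ d i then (μ : ℝ) ^ (d - 1) else 0) - 1) ∈ MW (Wdiv μ d) := by
  set v : Gp μ d → ℝ := fun x => (if x ∈ axis μ d i then (μ : ℝ) ^ (d - 1) else 0) - 1
  have hsum : ∑ x, v x = 0 := by
    obtain ⟨n, rfl⟩ := Nat.exists_eq_add_one_of_ne_zero i.pos.ne'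
    simp [v, sum_sub_distrib, sum_ite_mem, card_axis, pow_succ']
  refine ⟨hsum, fun x => by simp only [v]; split_ifs <;> simp, EuclideanSpace.single i 1,
    by simp, ?_, fun x => ?_⟩
  · rw [← sum_smul, hsum, zero_smul]
  · rw [sum_egen_sub_smul_apply, Fintype.sum_eq_single i fun j hj => by simp [hj]]
    simp [v, mem_axis_add_egen]

lemma isGreatest_kappaV_Wdiv (hd : 1 ≤ d) {θ : ℝ} (hθ : θ ∈ Set.Icc (0 : ℝ) 1) :
    IsGreatest {r | ∃ v ∈ MW (Wdiv μ d), r = kappaV (Gp μ d) v θ}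
      ((1 - θ) * Real.log ((μ : ℝ) ^ (d - 1))) := by
  let i : Fin d := ⟨0, hd⟩
  refine ⟨⟨_, mem_MW_Wdiv_axis i, (kappaV_ite_mem_sub_one ⟨0, ?_⟩ ?_ ?_ hθ.1).symm⟩, ?_⟩
  · simp [axis]
  · exact pow_pos (Nat.cast_pos.2 (NeZero.pos μ)) _
  · obtain ⟨n, rfl⟩ := Nat.exists_eq_add_one_of_ne_zero (Nat.one_le_iff_ne_zero.mp hd)
    simp [card_axis, pow_succ']
  · rintro _ ⟨v, hv, rfl⟩
    exact kappaV_le_mul_log hv.1 hv.2.1 (one_add_le_of_mem_MW hv) hθ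

end DivergenceFree

theorem statement11_general (μ d : ℕ) [NeZero μ] (hd : 2 ≤ d) :
    ∀ θ ∈ Set.Icc (0 : ℝ) 1,
      kappa (Wdiv μ d) θ = (((d : ℝ) - 1) / d) * Real.log ((μ : ℝ) ^ d) * (1 - θ) := by
  intro θ hθ
  have hlog : ((d : ℝ) - 1) / d * Real.log ((μ : ℝ) ^ d) * (1 - θ)
      = (1 - θ) * Real.log ((μ : ℝ) ^ (d - 1)) := by
    have : (d : ℝ) ≠ 0 := by positivity
    rw [Real.log_pow, Real.log_pow, Nat.cast_sub (by omega), Nat.cast_one]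
    field_simp
  rw [hlog]
  exact (isGreatest_kappaV_Wdiv (by omega) hθ).csSup_eq

/-- for `μ ≥ 4`, the space `W_div` is a geometric space of order `(d-1)/d`:
`κ(θ) = ((d-1)/d)(log m)(1-θ) = (d-1)(log μ)(1-θ)` on `[0,1]`. -/
theorem statement11 (μ d : ℕ) [NeZero μ] (hμ : 4 ≤ μ) (hd : 2 ≤ d) :
    ∀ θ ∈ Set.Icc (0 : ℝ) 1,
      kappa (Wdiv μ d) θ = (((d : ℝ) - 1) / d) * Real.log ((μ : ℝ) ^ d) * (1 - θ) :=
  statement11_general μ d hd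

end TracePaper
end
end

section
/- Let μ ≥ 4 and d ≥ 2. Then the space W_∇ is non-local of order 1/d and the space W_div is non-local of order (d−1)/d; that is, in each case, for every extremal vector v⊗a with support H ⊆ G, every w in the space, and every b ∈ ℂ^d, the condition b + w(x) = 0 for all x ∉ H implies that w is a scalar multiple of v⊗a. -/
open MeasureTheory Finset

noncomputable section

namespace TracePaper

variable {ι : Type} [Fintype ι]
variable {E : Type} [AddCommGroup E] [Module ℝ E]

section ComplexNonLocal

variable (μ d : ℕ) [NeZero μ]

/-- `v ⊗ a` is an extremal vector of `W ⊆ V ⊗ ℂ^d` (order `α`) with support `H ⊆ G`. -/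
def IsExtremalC (W : Set (Gp μ d → EuclideanSpace ℂ (Fin d))) (α : ℝ)
    (v : Gp μ d → ℝ) (a : EuclideanSpace ℂ (Fin d)) (H : Finset (Gp μ d)) : Prop :=
  a ≠ 0 ∧ (fun x => v x • a) ∈ W ∧
    (H.card : ℝ) = ((μ : ℝ) ^ d) ^ ((1 : ℝ) - α) ∧
    (∀ x ∈ H, v x = ((μ : ℝ) ^ d) ^ α - 1) ∧ ∀ x ∉ H, v x = -1

/-- `W` is non-local (of order `α`): if `b + w(x) = 0` off the support of an extremal vector
`v ⊗ a`, then `w` is a (complex) scalar multiple of `v ⊗ a`. -/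
def NonLocalC (W : Set (Gp μ d → EuclideanSpace ℂ (Fin d))) (α : ℝ) : Prop :=
  ∀ (v : Gp μ d → ℝ) (a : EuclideanSpace ℂ (Fin d)) (H : Finset (Gp μ d)),
    IsExtremalC μ d W α v a H →
    ∀ w ∈ W, ∀ b : EuclideanSpace ℂ (Fin d),
      (∀ x ∉ H, b + w x = 0) → ∃ c : ℂ, w = fun x => c • (v x • a)

end ComplexNonLocal

/-!
Let `v ⊗ a` be extremal with support `H` and `b + w = 0` off `H`. The fields `P = a + v ⊗ a`
(equal to `m ^ α • a` on `H`) and `F = b + w` both vanish off `H` and are constants plus elements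
of the space; once `F = κ • P`, summing over `G` gives `b = κ • a` and `w = κ • (v ⊗ a)`.
Fix `j₀` with `a j₀ ≠ 0`.

For `W_∇`, the sum of `P j₀` over a line in direction `e j₀` is `μ • a j₀`, so `H` meets every
such line exactly once. Hence `F j₀` equals its line sum `μ • b j₀` on `H`, and the vanishing curl
of `F` at `y - e j₀ ∉ H` gives `F y k = F (y - e j₀ + e k) j₀`.

For `W_div`, the flux through the hyperplanes `x j₀ = t` does not depend on `t`. For `P` this
means that each hyperplane contains exactly one point of `H`, so `F j₀` is constant on `H`, and the
divergence of `F` at `y - e k ∉ H` gives `F y k = -F (y - e k + e j₀) j₀`.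

In both cases the remaining components are the same linear expressions in the `j₀`-component for
`F` and for `P`.
-/

section Lattice

variable {μ d : ℕ}

@[simp] lemma egen_apply_self (j : Fin d) : egen μ d j j = 1 := Pi.single_eq_same j 1

lemma egen_apply_of_ne {i j : Fin d} (h : i ≠ j) : egen μ d j i = 0 := Pi.single_eq_of_ne h 1

lemma egen_ne_zero [Nontrivial (ZMod μ)] (j : Fin d) : egen μ d j ≠ 0 := fun h => by
  simpa using congrFun h j

lemma egen_injective [Nontrivial (ZMod μ)] : Function.Injective (egen μ d) := by
  intro i j h
  by_contra hij
  simpa [egen_apply_of_ne hij] using congrFun h i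

variable [NeZero μ]

lemma sum_zmod_sub_eq_zero {M : Type*} [AddCommGroup M] (φ : Gp μ d → M) (y u : Gp μ d) :
    ∑ t : ZMod μ, (φ (y + t • u + u) - φ (y + t • u)) = 0 := by
  have h : ∀ t : ZMod μ, y + t • u + u = y + (t + 1) • u := fun t => by
    rw [add_smul, one_smul, add_assoc]
  simp only [h, Finset.sum_sub_distrib]
  exact sub_eq_zero.2 (Equiv.sum_comp (Equiv.addRight 1) fun t => φ (y + t • u))

lemma ZMod.eq_of_forall_add_one_eq {α : Type*} {f : ZMod μ → α} (h : ∀ t, f (t + 1) = f t)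
    (s t : ZMod μ) : f s = f t := by
  have key : ∀ n : ℕ, f (t + n) = f t := by
    intro n
    induction n with
    | zero => simp
    | succ n ih => rw [Nat.cast_succ, ← add_assoc, h, ih]
  simpa using key (s - t).val

end Lattice

lemma exists_eq_mul_of_const_on {K ι : Type*} [Field K] {H : Finset ι} {f g : ι → K} {y₀ : ι}
    (hg : g y₀ ≠ 0) (hf0 : ∀ x ∉ H, f x = 0) (hg0 : ∀ x ∉ H, g x = 0)
    (hfH : ∀ x ∈ H, ∀ x' ∈ H, f x = f x') (hgH : ∀ x ∈ H, ∀ x' ∈ H, g x = g x') :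
    ∃ c, ∀ x, f x = c * g x := by
  have hy₀ : y₀ ∈ H := by
    by_contra h
    exact hg (hg0 y₀ h)
  refine ⟨f y₀ / g y₀, fun x => ?_⟩
  by_cases hx : x ∈ H
  · rw [hfH x hx y₀ hy₀, hgH x hx y₀ hy₀, div_mul_cancel₀ _ hg]
  · rw [hf0 x hx, hg0 x hx, mul_zero]

section Gradient

variable {μ d : ℕ} {K : Type*} [Field K] {H : Finset (Gp μ d)} {j₀ : Fin d}

lemma const_add_grad_apply_eq [Nontrivial (ZMod μ)] {b : Fin d → K} {φ : Gp μ d → K}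
    {F : Gp μ d → Fin d → K} (hH : ∀ y ∈ H, ∀ t : ZMod μ, t ≠ 0 → y + t • egen μ d j₀ ∉ H)
    (hF : ∀ x j, F x j = b j + (φ (x + egen μ d j) - φ x)) (hF0 : ∀ x ∉ H, F x = 0)
    {y : Gp μ d} (hy : y ∈ H) (k : Fin d) :
    F y k = F (y - egen μ d j₀ + egen μ d k) j₀ := by
  set z := y - egen μ d j₀
  have hz : z ∉ H := by
    simpa [z, sub_eq_add_neg] using hH y hy (-1) (neg_ne_zero.2 one_ne_zero)
  have curl : F (z + egen μ d j₀) k - F z k = F (z + egen μ d k) j₀ - F z j₀ := by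
    simp only [hF, add_right_comm z (egen μ d j₀) (egen μ d k)]
    ring
  simpa [z, hF0 z hz] using curl

variable [NeZero μ]

lemma sum_line_eq_of_const_add_grad {b : Fin d → K} {φ : Gp μ d → K} {F : Gp μ d → Fin d → K}
    (hF : ∀ x j, F x j = b j + (φ (x + egen μ d j) - φ x)) (y : Gp μ d) (j : Fin d) :
    ∑ t : ZMod μ, F (y + t • egen μ d j) j = μ * b j := by
  simp only [hF, Finset.sum_add_distrib, sum_zmod_sub_eq_zero, add_zero, Finset.sum_const,
    Finset.card_univ, ZMod.card, nsmul_eq_mul]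

lemma notMem_of_const_add_grad [CharZero K] {b : Fin d → K} {φ : Gp μ d → K}
    {P : Gp μ d → Fin d → K} (hP : ∀ x j, P x j = b j + (φ (x + egen μ d j) - φ x))
    (hPH : ∀ x, P x j₀ = if x ∈ H then μ * b j₀ else 0) (hb : b j₀ ≠ 0)
    {y : Gp μ d} (hy : y ∈ H) {t : ZMod μ} (ht : t ≠ 0) : y + t • egen μ d j₀ ∉ H := by
  intro hyt
  have hsum := sum_line_eq_of_const_add_grad hP y j₀
  simp only [hPH, Finset.sum_ite, Finset.sum_const_zero, add_zero, Finset.sum_const,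
    nsmul_eq_mul] at hsum
  have hμb : (μ : K) * b j₀ ≠ 0 := mul_ne_zero (Nat.cast_ne_zero.2 (NeZero.ne μ)) hb
  have hcard : #{s : ZMod μ | y + s • egen μ d j₀ ∈ H} = 1 := by
    exact_mod_cast mul_right_cancel₀ hμb (hsum.trans (one_mul _).symm)
  exact ht (Finset.card_le_one.1 hcard.le t (by simpa using hyt) 0 (by simpa using hy))

lemma const_add_grad_apply_of_mem {b : Fin d → K} {φ : Gp μ d → K} {F : Gp μ d → Fin d → K}
    (hH : ∀ y ∈ H, ∀ t : ZMod μ, t ≠ 0 → y + t • egen μ d j₀ ∉ H)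
    (hF : ∀ x j, F x j = b j + (φ (x + egen μ d j) - φ x)) (hF0 : ∀ x ∉ H, F x = 0)
    {y : Gp μ d} (hy : y ∈ H) : F y j₀ = μ * b j₀ := by
  rw [← sum_line_eq_of_const_add_grad hF y j₀, Finset.sum_eq_single (0 : ZMod μ)]
  · simp
  · intro t _ ht
    rw [hF0 _ (hH y hy t ht)]
    rfl
  · simp

lemma exists_eq_mul_of_const_add_grad [Nontrivial (ZMod μ)] {b c : Fin d → K}
    {φ ψ : Gp μ d → K} {F P : Gp μ d → Fin d → K}
    (hH : ∀ y ∈ H, ∀ t : ZMod μ, t ≠ 0 → y + t • egen μ d j₀ ∉ H)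
    (hF : ∀ x j, F x j = b j + (φ (x + egen μ d j) - φ x))
    (hP : ∀ x j, P x j = c j + (ψ (x + egen μ d j) - ψ x))
    (hF0 : ∀ x ∉ H, F x = 0) (hP0 : ∀ x ∉ H, P x = 0) {y₀ : Gp μ d} (hPy₀ : P y₀ j₀ ≠ 0) :
    ∃ κ, ∀ x j, F x j = κ * P x j := by
  obtain ⟨κ, hκ⟩ := exists_eq_mul_of_const_on (f := (F · j₀)) (g := (P · j₀)) hPy₀
    (fun x hx => by simp [hF0 x hx]) (fun x hx => by simp [hP0 x hx])
    (fun x hx x' hx' => by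
      rw [const_add_grad_apply_of_mem hH hF hF0 hx, const_add_grad_apply_of_mem hH hF hF0 hx'])
    (fun x hx x' hx' => by
      rw [const_add_grad_apply_of_mem hH hP hP0 hx, const_add_grad_apply_of_mem hH hP hP0 hx'])
  refine ⟨κ, fun x k => ?_⟩
  by_cases hx : x ∈ H
  · rw [const_add_grad_apply_eq hH hF hF0 hx, const_add_grad_apply_eq hH hP hP0 hx, hκ]
  · simp [hF0 x hx, hP0 x hx]

end Gradient

section Divergence

variable {μ d : ℕ} {M : Type*} [AddCommGroup M] {H : Finset (Gp μ d)} {j₀ : Fin d}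

def IsDivFree (F : Gp μ d → Fin d → M) : Prop :=
  ∀ x, ∑ j, (F (x + egen μ d j) j - F x j) = 0

lemma IsDivFree.const_add {F : Gp μ d → Fin d → M} (hF : IsDivFree F) (b : Fin d → M) :
    IsDivFree fun x j => b j + F x j := fun x => by
  simpa only [add_sub_add_left_eq_sub] using hF x

lemma IsDivFree.apply_eq_neg_of_injOn [Nontrivial (ZMod μ)] {F : Gp μ d → Fin d → M}
    (hF : IsDivFree F) (hinj : Set.InjOn (· j₀) (H : Set (Gp μ d))) (hF0 : ∀ x ∉ H, F x = 0)
    {y : Gp μ d} (hy : y ∈ H) {k : Fin d} (hk : k ≠ j₀) :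
    F y k = -F (y - egen μ d k + egen μ d j₀) j₀ := by
  set x := y - egen μ d k
  have hxj : ∀ i ≠ j₀, (x + egen μ d i) j₀ = y j₀ := fun i hi => by
    simp [x, egen_apply_of_ne hk.symm, egen_apply_of_ne hi.symm]
  have hx : x ∉ H := fun hxH => egen_ne_zero k <| sub_eq_self.1 <|
    hinj hxH hy (by simp [x, egen_apply_of_ne hk.symm])
  -- the other neighbours `x + e i` of `x` lie in the hyperplane of `y` without being `y`
  have hoff : ∀ i, i ≠ k ∧ i ≠ j₀ → x + egen μ d i ∉ H := fun i hi hxH =>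
    hi.1 (egen_injective (add_left_cancel ((hinj hxH hy (hxj i hi.2)).trans
      (sub_add_cancel y (egen μ d k)).symm)))
  have h := hF x
  simp only [hF0 x hx, Pi.zero_apply, sub_zero] at h
  rw [Fintype.sum_eq_add k j₀ hk fun i hi => by rw [hF0 _ (hoff i hi)]; rfl, sub_add_cancel] at h
  exact eq_neg_of_add_eq_zero_left h

variable [NeZero μ]

def flux (F : Gp μ d → Fin d → M) (j : Fin d) (t : ZMod μ) : M :=
  ∑ x with x j = t, F x j

lemma sum_filter_apply_add_egen (F : Gp μ d → Fin d → M) (j k : Fin d) (t : ZMod μ) :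
    ∑ x with x j = t, F (x + egen μ d k) k = ∑ x with x j = t + egen μ d k j, F x k := by
  rw [Finset.sum_filter, Finset.sum_filter,
    ← Equiv.sum_comp (Equiv.addRight (egen μ d k)) (fun x => if x j = _ then F x k else 0)]
  simp

lemma IsDivFree.flux_add_one {F : Gp μ d → Fin d → M} (hF : IsDivFree F) (j : Fin d)
    (t : ZMod μ) : flux F j (t + 1) = flux F j t := by
  have h : ∑ k, ∑ x with x j = t, (F (x + egen μ d k) k - F x k) = 0 := by
    rw [Finset.sum_comm]
    exact Finset.sum_eq_zero fun x _ => hF x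
  rw [Fintype.sum_eq_single j fun k hk => ?_] at h
  · rwa [Finset.sum_sub_distrib, sum_filter_apply_add_egen, egen_apply_self, sub_eq_zero] at h
  · rw [Finset.sum_sub_distrib, sum_filter_apply_add_egen, egen_apply_of_ne hk.symm, add_zero,
      sub_self]

lemma IsDivFree.flux_eq {F : Gp μ d → Fin d → M} (hF : IsDivFree F) (j : Fin d) (s t : ZMod μ) :
    flux F j s = flux F j t :=
  ZMod.eq_of_forall_add_one_eq (hF.flux_add_one j) s t

lemma flux_eq_apply_of_injOn {F : Gp μ d → Fin d → M}
    (hinj : Set.InjOn (· j₀) (H : Set (Gp μ d))) (hF0 : ∀ x ∉ H, F x = 0) {y : Gp μ d}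
    (hy : y ∈ H) : flux F j₀ (y j₀) = F y j₀ := by
  refine Finset.sum_eq_single_of_mem y (by simp) fun x hx hxy => ?_
  have hxH : x ∉ H := fun hxH => hxy (hinj hxH hy (Finset.mem_filter.1 hx).2)
  rw [hF0 x hxH]
  rfl

lemma IsDivFree.apply_eq_of_injOn {F : Gp μ d → Fin d → M} (hF : IsDivFree F)
    (hinj : Set.InjOn (· j₀) (H : Set (Gp μ d))) (hF0 : ∀ x ∉ H, F x = 0)
    {y y' : Gp μ d} (hy : y ∈ H) (hy' : y' ∈ H) : F y j₀ = F y' j₀ := by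
  rw [← flux_eq_apply_of_injOn hinj hF0 hy, ← flux_eq_apply_of_injOn hinj hF0 hy',
    hF.flux_eq]

variable {K : Type*} [Field K]

lemma injOn_of_isDivFree [CharZero K] {P : Gp μ d → Fin d → K} (hP : IsDivFree P) {p : K}
    (hp : p ≠ 0) (hPH : ∀ x, P x j₀ = if x ∈ H then p else 0) (hcard : #H = μ) :
    Set.InjOn (· j₀) (H : Set (Gp μ d)) := by
  have hflux : ∀ t, flux P j₀ t = #{x ∈ H | x j₀ = t} * p := by
    intro t
    simp [flux, hPH, Finset.filter_inter]
  have hcount : ∀ t, #{x ∈ H | x j₀ = t} = #{x ∈ H | x j₀ = 0} := fun t => by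
    exact_mod_cast mul_right_cancel₀ hp
      ((hflux t).symm.trans ((hP.flux_eq j₀ t 0).trans (hflux 0)))
  have hone : #{x ∈ H | x j₀ = 0} = 1 := by
    have h := Finset.card_eq_sum_card_fiberwise (f := (· j₀)) (t := Finset.univ) (s := H)
      fun _ _ => Finset.mem_coe.2 (Finset.mem_univ _)
    rw [Finset.sum_congr rfl fun t _ => hcount t, Finset.sum_const, Finset.card_univ, ZMod.card,
      smul_eq_mul, hcard] at h
    exact (Nat.mul_eq_left (NeZero.ne μ)).1 h.symm
  intro y hy y' hy' h
  exact Finset.card_le_one.1 ((hcount (y j₀)).trans hone).le y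
    (Finset.mem_filter.2 ⟨hy, rfl⟩) y' (Finset.mem_filter.2 ⟨hy', h.symm⟩)

lemma IsDivFree.exists_eq_mul_of_injOn [Nontrivial (ZMod μ)] {F P : Gp μ d → Fin d → K}
    (hF : IsDivFree F) (hP : IsDivFree P) (hinj : Set.InjOn (· j₀) (H : Set (Gp μ d)))
    (hF0 : ∀ x ∉ H, F x = 0) (hP0 : ∀ x ∉ H, P x = 0) {y₀ : Gp μ d} (hPy₀ : P y₀ j₀ ≠ 0) :
    ∃ κ, ∀ x j, F x j = κ * P x j := by
  obtain ⟨κ, hκ⟩ := exists_eq_mul_of_const_on (f := (F · j₀)) (g := (P · j₀)) hPy₀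
    (fun x hx => by simp [hF0 x hx]) (fun x hx => by simp [hP0 x hx])
    (fun x hx x' hx' => hF.apply_eq_of_injOn hinj hF0 hx hx')
    (fun x hx x' hx' => hP.apply_eq_of_injOn hinj hP0 hx hx')
  refine ⟨κ, fun x k => ?_⟩
  by_cases hx : x ∈ H
  · by_cases hk : k = j₀
    · exact hk ▸ hκ x
    · rw [hF.apply_eq_neg_of_injOn hinj hF0 hx hk, hP.apply_eq_neg_of_injOn hinj hP0 hx hk, hκ,
        mul_neg]
  · simp [hF0 x hx, hP0 x hx]

end Divergence

section Extremal

variable {μ d : ℕ} {W : Set (Gp μ d → EuclideanSpace ℂ (Fin d))} {α : ℝ}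
  {v : Gp μ d → ℝ} {a : EuclideanSpace ℂ (Fin d)} {H : Finset (Gp μ d)}

lemma IsExtremalC.exists_apply_ne_zero (h : IsExtremalC μ d W α v a H) : ∃ j, a j ≠ 0 := by
  by_contra! h'
  exact h.1 (PiLp.ext h')

lemma IsExtremalC.apply_add_smul (h : IsExtremalC μ d W α v a H) (x : Gp μ d) (j : Fin d) :
    (a + v x • a) j = if x ∈ H then ((((μ : ℝ) ^ d) ^ α : ℝ) : ℂ) * a j else 0 := by
  rw [PiLp.add_apply, PiLp.smul_apply, Complex.real_smul]
  split_ifs with hx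
  · rw [h.2.2.2.1 x hx]
    push_cast
    ring
  · rw [h.2.2.2.2 x hx]
    push_cast
    ring

lemma IsExtremalC.add_smul_eq_zero (h : IsExtremalC μ d W α v a H) {x : Gp μ d} (hx : x ∉ H) :
    a + v x • a = 0 :=
  PiLp.ext fun j => by rw [h.apply_add_smul, if_neg hx]; rfl

variable [NeZero μ]

lemma IsExtremalC.support_nonempty (h : IsExtremalC μ d W α v a H) : H.Nonempty := by
  rw [← Finset.card_pos, ← Nat.cast_pos (α := ℝ), h.2.2.1]
  exact Real.rpow_pos_of_pos (pow_pos (Nat.cast_pos.2 (NeZero.pos μ)) d) _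

lemma nonLocalC_of_exists_mul (hW : ∀ w ∈ W, ∑ x, w x = 0)
    (h : ∀ v a H, IsExtremalC μ d W α v a H → ∀ w ∈ W, ∀ b, (∀ x ∉ H, b + w x = 0) →
      ∃ κ : ℂ, ∀ x j, (b + w x) j = κ * (a + v x • a) j) : NonLocalC μ d W α := by
  intro v a H hext w hw b hb
  obtain ⟨κ, hκ⟩ := h v a H hext w hw b hb
  replace hκ : ∀ x, b + w x = κ • (a + v x • a) := fun x => PiLp.ext (hκ x)
  have hv : ∑ x, v x = 0 := by
    have h0 := hW _ hext.2.1
    rw [← Finset.sum_smul] at h0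
    exact (smul_eq_zero.1 h0).resolve_right hext.1
  have hb' : b = κ • a := by
    have hsum := Finset.sum_congr rfl fun x (_ : x ∈ Finset.univ) => hκ x
    rw [Finset.sum_add_distrib, hW w hw, ← Finset.smul_sum, Finset.sum_add_distrib,
      ← Finset.sum_smul, hv, zero_smul, add_zero, add_zero, Finset.sum_const, Finset.sum_const,
      smul_comm] at hsum
    rw [← Nat.cast_smul_eq_nsmul ℂ, ← Nat.cast_smul_eq_nsmul ℂ] at hsum
    exact smul_right_injective _ (Nat.cast_ne_zero.2 Fintype.card_ne_zero) hsum
  refine ⟨κ, funext fun x => add_left_cancel (a := b) ?_⟩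
  rw [hκ x, hb', ← smul_add]

end Extremal

section NonLocal

variable {μ d : ℕ} [NeZero μ] [Fact (1 < μ)]

theorem nonLocalC_wgrad (hd : d ≠ 0) : NonLocalC μ d (Wgrad μ d) (d : ℝ)⁻¹ := by
  refine nonLocalC_of_exists_mul (fun w hw => hw.1) fun v a H hext w hw b hb => ?_
  obtain ⟨j₀, hj₀⟩ := hext.exists_apply_ne_zero
  obtain ⟨y₀, hy₀⟩ := hext.support_nonempty
  obtain ⟨-, f, hf⟩ := hext.2.1
  obtain ⟨-, g, hg⟩ := hw
  have hm : ((((μ : ℝ) ^ d) ^ (d : ℝ)⁻¹ : ℝ) : ℂ) = μ := by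
    rw [Real.pow_rpow_inv_natCast (Nat.cast_nonneg μ) hd, Complex.ofReal_natCast]
  have hP : ∀ x j, (a + v x • a) j = a j + ((f (x + egen μ d j) : ℂ) - f x) := fun x j => by
    rw [← hf x j]
    rfl
  have hF : ∀ x j, (b + w x) j = b j + ((g (x + egen μ d j) : ℂ) - g x) := fun x j => by
    rw [← hg x j]
    rfl
  have hPH : ∀ x, (a + v x • a) j₀ = if x ∈ H then μ * a j₀ else 0 := fun x => by
    rw [hext.apply_add_smul, hm]
  have hline : ∀ y ∈ H, ∀ t : ZMod μ, t ≠ 0 → y + t • egen μ d j₀ ∉ H :=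
    fun y hy t ht => notMem_of_const_add_grad (φ := fun x => (f x : ℂ)) hP hPH hj₀ hy ht
  obtain ⟨κ, hκ⟩ := exists_eq_mul_of_const_add_grad (F := fun x j => (b + w x) j)
    (P := fun x j => (a + v x • a) j) (φ := fun x => (g x : ℂ)) (ψ := fun x => (f x : ℂ))
    hline hF hP
    (fun x hx => funext fun j => by rw [hb x hx]; rfl)
    (fun x hx => funext fun j => by rw [hext.add_smul_eq_zero hx]; rfl)
    (by rw [hPH, if_pos hy₀]; exact mul_ne_zero (Nat.cast_ne_zero.2 (NeZero.ne μ)) hj₀)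
  exact ⟨κ, hκ⟩

theorem nonLocalC_wdiv (hd : d ≠ 0) : NonLocalC μ d (Wdiv μ d) (((d : ℝ) - 1) / d) := by
  refine nonLocalC_of_exists_mul (fun w hw => hw.1) fun v a H hext w hw b hb => ?_
  obtain ⟨j₀, hj₀⟩ := hext.exists_apply_ne_zero
  obtain ⟨y₀, hy₀⟩ := hext.support_nonempty
  have hcard : #H = μ := by
    have h := hext.2.2.1
    rw [show (1 : ℝ) - ((d : ℝ) - 1) / d = (d : ℝ)⁻¹ by field_simp; ring,
      Real.pow_rpow_inv_natCast (Nat.cast_nonneg μ) hd] at h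
    exact_mod_cast h
  have hp : ((((μ : ℝ) ^ d) ^ (((d : ℝ) - 1) / d) : ℝ) : ℂ) * a j₀ ≠ 0 :=
    mul_ne_zero (Complex.ofReal_ne_zero.2
      (Real.rpow_pos_of_pos (pow_pos (Nat.cast_pos.2 (NeZero.pos μ)) d) _).ne') hj₀
  have hP : IsDivFree fun x j => (a + v x • a) j :=
    IsDivFree.const_add (F := fun x j => (v x • a) j) hext.2.1.2 a
  have hF : IsDivFree fun x j => (b + w x) j := IsDivFree.const_add (F := fun x j => w x j) hw.2 b
  have hinj := injOn_of_isDivFree hP hp (fun x => hext.apply_add_smul x j₀) hcard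
  obtain ⟨κ, hκ⟩ := hF.exists_eq_mul_of_injOn hP hinj (y₀ := y₀)
    (fun x hx => funext fun j => by rw [hb x hx]; rfl)
    (fun x hx => funext fun j => by rw [hext.add_smul_eq_zero hx]; rfl)
    (by rw [hext.apply_add_smul, if_pos hy₀]; exact hp)
  exact ⟨κ, hκ⟩

end NonLocal

/-- for `μ ≥ 4` and `d ≥ 2`, the space `W_∇` is non-local of order `1/d` and
the space `W_div` is non-local of order `(d-1)/d`. -/
theorem statement12 (μ d : ℕ) [NeZero μ] (hμ : 4 ≤ μ) (hd : 2 ≤ d) :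
    NonLocalC μ d (Wgrad μ d) ((d : ℝ)⁻¹) ∧
      NonLocalC μ d (Wdiv μ d) (((d : ℝ) - 1) / d) := by
  have : Fact (1 < μ) := ⟨by omega⟩
  exact ⟨nonLocalC_wgrad (by omega), nonLocalC_wdiv (by omega)⟩

end TracePaper
end
end

section
/- Fix a linear subspace W ⊆ V⊗ℝ^ℓ. Let U ⊆ (ℝ^ℓ)^m be an open neighborhood of the set {(x_1,…,x_m) ∈ (ℝ^ℓ)^m : there exist v ∈ 𝕄^W and a ∈ ℝ^ℓ∖{0} such that x_j = (1+v_j)·a for all j ∈ {1,…,m}}. Then there exists ε > 0 such that every tuple (x_1,…,x_m) ∈ (ℝ^ℓ)^m satisfying |x| = 1, x⃗ ∈ W, and (1/m)∑_{j=1}^m |x_j| < (1+ε)·|x| — where x = (1/m)∑_j x_j and x⃗ = (x_1−x,…,x_m−x) — belongs to U. -/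
/-!
If the mean norm `(1/m) ∑ |x_j|` does not exceed `|x|`, equality holds in the triangle
inequality, and strict convexity of `ℝ^ℓ` puts every `x_j` on the ray of `x`: then
`x_j = (1 + v_j) x` with `v ∈ 𝕄^W`, because `v ⊗ x = x⃗ ∈ W`. For `ε` a compactness argument
finishes: on the compact set of admissible tuples with mean norm at most `2`, the mean norm
attains a minimum on the part outside `U`, and that minimum is `> 1`.
-/

open MeasureTheory Finset

noncomputable section

namespace TracePaper

variable {ι : Type} [Fintype ι]
variable {E : Type} [AddCommGroup E] [Module ℝ E]

lemma _root_.IsCompact.exists_pos_forall_lt_add_imp_mem {α : Type*} [TopologicalSpace α]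
    {K U : Set α} {f : α → ℝ} {c : ℝ} (hK : IsCompact K) (hf : ContinuousOn f K)
    (hU : IsOpen U) (h : ∀ x ∈ K, f x ≤ c → x ∈ U) :
    ∃ ε > 0, ∀ x ∈ K, f x < c + ε → x ∈ U := by
  rcases (K \ U).eq_empty_or_nonempty with hKU | hKU
  · exact ⟨1, one_pos, fun x hx _ => Set.sdiff_eq_empty.mp hKU hx⟩
  obtain ⟨x₀, ⟨hx₀K, hx₀U⟩, hmin⟩ := (hK.diff hU).exists_isMinOn hKU (hf.mono Set.sdiff_subset)
  refine ⟨f x₀ - c, sub_pos.mpr (not_le.mp fun hle => hx₀U (h x₀ hx₀K hle)), fun x hx hlt => ?_⟩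
  by_contra hxU
  have : f x₀ ≤ f x := hmin ⟨hx, hxU⟩
  linarith

section Flat

variable {E' : Type} [NormedAddCommGroup E']

def meanNorm (X : ι → E') : ℝ := (Fintype.card ι : ℝ)⁻¹ * ∑ j, ‖X j‖

lemma continuous_meanNorm : Continuous (meanNorm : (ι → E') → ℝ) := by
  unfold meanNorm
  fun_prop

lemma isCompact_setOf_meanNorm_le [ProperSpace E'] (r : ℝ) :
    IsCompact {X : ι → E' | meanNorm X ≤ r} := by
  refine Metric.isCompact_of_isClosed_isBounded
    (isClosed_le continuous_meanNorm continuous_const) ?_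
  refine isBounded_iff_forall_norm_le.mpr ⟨(Fintype.card ι : ℝ) * r, fun X hX => ?_⟩
  have hsum : ∑ i, ‖X i‖ ≤ Fintype.card ι * r := by
    rcases (Fintype.card ι).eq_zero_or_pos with hc | hc
    · have := Fintype.card_eq_zero_iff.mp hc
      simp
    · calc ∑ i, ‖X i‖ = Fintype.card ι * meanNorm X := by
            rw [meanNorm, mul_inv_cancel_left₀ (by positivity)]
        _ ≤ Fintype.card ι * r := by gcongr; exact hX
  exact (pi_norm_le_iff_of_nonneg ((sum_nonneg fun i _ => norm_nonneg _).trans hsum)).mpr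
    fun j => (single_le_sum (fun i _ => norm_nonneg (X i)) (mem_univ j)).trans hsum

variable [NormedSpace ℝ E']

lemma continuous_avg : Continuous (avg : (ι → E') → E') := by
  unfold avg
  fun_prop

lemma sameRay_sum_of_norm_sum_eq [StrictConvexSpace ℝ E'] {X : ι → E'}
    (h : ‖∑ i, X i‖ = ∑ i, ‖X i‖) (j : ι) : SameRay ℝ (X j) (∑ i, X i) := by
  classical
  set r := ∑ i ∈ univ.erase j, X i
  have hsum : ∑ i, X i = X j + r := (add_sum_erase _ _ (mem_univ j)).symm
  have hnorm : ∑ i, ‖X i‖ = ‖X j‖ + ∑ i ∈ univ.erase j, ‖X i‖ :=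
    (add_sum_erase _ _ (mem_univ j)).symm
  have hadd : ‖X j + r‖ = ‖X j‖ + ‖r‖ := by
    refine le_antisymm (norm_add_le _ _) ?_
    have := norm_sum_le (univ.erase j) X
    rw [← hsum, h, hnorm]
    linarith
  rw [hsum]
  exact SameRay.rfl.add_right (sameRay_iff_norm_add.mpr hadd)

lemma exists_eq_one_add_smul_avg_of_meanNorm_le [StrictConvexSpace ℝ E'] {X : ι → E'}
    (h0 : avg X ≠ 0) (hflat : meanNorm X ≤ ‖avg X‖) :
    ∃ v : ι → ℝ, ∑ j, v j = 0 ∧ (∀ j, -1 ≤ v j) ∧ ∀ j, X j = (1 + v j) • avg X := by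
  set c : ℝ := (Fintype.card ι : ℝ)
  have hc : c ≠ 0 := fun hc => h0 (by simp [avg, c, hc])
  have hc0 : 0 < c := lt_of_le_of_ne (Nat.cast_nonneg _) (Ne.symm hc)
  have heq : ‖∑ i, X i‖ = ∑ i, ‖X i‖ := by
    refine le_antisymm (norm_sum_le _ _) ?_
    rw [meanNorm, avg, norm_smul, norm_inv, Real.norm_natCast] at hflat
    exact le_of_mul_le_mul_left hflat (inv_pos.mpr hc0)
  have hray (j : ι) : ∃ t : ℝ, 0 ≤ t ∧ X j = t • avg X :=
    ((sameRay_sum_of_norm_sum_eq heq j).nonneg_smul_right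
      (inv_nonneg.mpr hc0.le)).exists_nonneg_right h0
  choose t ht hXt using hray
  have hsum : ∑ j, t j = c := by
    have : (c⁻¹ * ∑ j, t j) • avg X = (1 : ℝ) • avg X := by
      rw [one_smul, mul_smul, sum_smul]
      simp_rw [← hXt]
      rfl
    have := smul_left_injective ℝ h0 this
    field_simp at this
    linarith
  refine ⟨fun j => t j - 1, ?_, fun j => by linarith [ht j], fun j => by simp [hXt j]⟩
  simp [sum_sub_distrib, hsum, c]

end Flat

theorem statement13_general (m ℓ : ℕ)
    (W : Submodule ℝ (Fin m → EuclideanSpace ℝ (Fin ℓ)))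
    (U : Set (Fin m → EuclideanSpace ℝ (Fin ℓ))) (hUopen : IsOpen U)
    (hUsub : {X : Fin m → EuclideanSpace ℝ (Fin ℓ) |
        ∃ v ∈ MW (W : Set (Fin m → EuclideanSpace ℝ (Fin ℓ))),
          ∃ a : EuclideanSpace ℝ (Fin ℓ), a ≠ 0 ∧ ∀ j, X j = (1 + v j) • a} ⊆ U) :
    ∃ ε > (0 : ℝ), ∀ X : Fin m → EuclideanSpace ℝ (Fin ℓ),
      ‖avg X‖ = 1 →
      (fun j => X j - avg X) ∈ W →
      (m : ℝ)⁻¹ * ∑ j, ‖X j‖ < (1 + ε) * ‖avg X‖ →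
      X ∈ U := by
  set K := {X : Fin m → EuclideanSpace ℝ (Fin ℓ) | ‖avg X‖ = 1 ∧ (fun j => X j - avg X) ∈ W}
  have hKclosed : IsClosed K :=
    (isClosed_eq continuous_avg.norm continuous_const).inter
      (W.closed_of_finiteDimensional.preimage
        (continuous_pi fun j => (continuous_apply j).sub continuous_avg))
  have hflat : ∀ X ∈ K ∩ {X | meanNorm X ≤ 2}, meanNorm X ≤ 1 → X ∈ U := by
    rintro X ⟨⟨hX1, hXW⟩, -⟩ hX
    have ha : avg X ≠ 0 := norm_ne_zero_iff.mp (hX1 ▸ one_ne_zero)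
    obtain ⟨v, hv0, hv1, hXv⟩ := exists_eq_one_add_smul_avg_of_meanNorm_le ha (hX1 ▸ hX)
    refine hUsub ⟨v, ⟨hv0, hv1, avg X, ha, ?_⟩, avg X, ha, hXv⟩
    have hcentered : (fun j => v j • avg X) = fun j => X j - avg X :=
      funext fun j => by rw [hXv j, add_smul, one_smul, add_sub_cancel_left]
    exact hcentered ▸ hXW
  have hKc : IsCompact (K ∩ {X | meanNorm X ≤ 2}) :=
    (isCompact_setOf_meanNorm_le 2).inter_left hKclosed
  obtain ⟨ε, hε, hεU⟩ :=
    hKc.exists_pos_forall_lt_add_imp_mem continuous_meanNorm.continuousOn hUopen hflat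
  refine ⟨min ε 1, by positivity, fun X hX1 hXW hlt => ?_⟩
  have hlt' : meanNorm X < 1 + min ε 1 := by simpa [meanNorm, hX1] using hlt
  have hX2 : meanNorm X ≤ 2 := by linarith [min_le_right ε 1]
  exact hεU X ⟨⟨hX1, hXW⟩, hX2⟩ (by linarith [min_le_left ε 1])

/-- Lemma `FlatRankOne`: flat configurations with `x⃗ ∈ W` and `|x| = 1` lie
in any given neighborhood `U` of the set of rank-one configurations `((1+v_j) a)_j`,
`v ∈ 𝕄^W`, `a ≠ 0`, once `ε` is small enough. -/
theorem statement13 (m ℓ : ℕ) (hm : 2 ≤ m) (hℓ : 1 ≤ ℓ)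
    (W : Submodule ℝ (Fin m → EuclideanSpace ℝ (Fin ℓ)))
    (hWV : ∀ w ∈ W, ∑ j, w j = 0)
    (U : Set (Fin m → EuclideanSpace ℝ (Fin ℓ))) (hUopen : IsOpen U)
    (hUsub : {X : Fin m → EuclideanSpace ℝ (Fin ℓ) |
        ∃ v ∈ MW (W : Set (Fin m → EuclideanSpace ℝ (Fin ℓ))),
          ∃ a : EuclideanSpace ℝ (Fin ℓ), a ≠ 0 ∧ ∀ j, X j = (1 + v j) • a} ⊆ U) :
    ∃ ε > (0 : ℝ), ∀ X : Fin m → EuclideanSpace ℝ (Fin ℓ),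
      ‖avg X‖ = 1 →
      (fun j => X j - avg X) ∈ W →
      (m : ℝ)⁻¹ * ∑ j, ‖X j‖ < (1 + ε) * ‖avg X‖ →
      X ∈ U :=
  statement13_general m ℓ W U hUopen hUsub

end TracePaper
end
end
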